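/- arXiv:2507.11850 — 5 statements merged into one kernel-verified Lean document; each statement's English description precedes it below -/
import Mathlib

section
/- Under the flotation setup, the function t is differentiable with t'(s) = −det(c(s), γ'(s)) / det(c(s), γ'(t(s))) for every s, and the flotation curve satisfies r₁'(s) = (det(γ'(s), γ'(t(s))) / (2·det(c(s), γ'(t(s))))) · c(s). In particular, at every s where γ'(s) and γ'(t(s)) are not parallel, the tangent vector of the flotation curve is a nonzero multiple of the chord of flotation c(s) (the Second Theorem of Dupin on the plane). -/
open Real MeasureTheory intervalIntegral

noncomputable section

/-- The Euclidean plane. -/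
abbrev R2 := EuclideanSpace ℝ (Fin 2)

/-- The planar determinant `det(u,v) = u₁v₂ − u₂v₁`. -/
def det2 (u v : R2) : ℝ := u 0 * v 1 - u 1 * v 0

/-- The flotation curve `r₁(s) = (γ(s) + γ(t(s)))/2`. -/
def flotCurve (γ : ℝ → R2) (t : ℝ → ℝ) (s : ℝ) : R2 := ((1:ℝ)/2) • (γ s + γ (t s))

/-- The buoyancy (centroid) curve
`r₂(s) = γ(s) + (1/(3δ))·∫_s^{t(s)} det(γ(u) − γ(s), γ'(u))·(γ(u) − γ(s)) du`. -/
def buoyCurve (γ : ℝ → R2) (t : ℝ → ℝ) (δ : ℝ) (s : ℝ) : R2 :=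
  γ s + (1/(3*δ)) • ∫ u in s..t s, det2 (γ u - γ s) (deriv γ u) • (γ u - γ s)

lemma hasDerivAt_apply {f : ℝ → R2} {f' : R2} {s : ℝ} (hf : HasDerivAt f f' s) (i : Fin 2) :
    HasDerivAt (fun s => f s i) (f' i) s := by
  have := (EuclideanSpace.proj (𝕜 := ℝ) i).hasFDerivAt.comp_hasDerivAt s hf
  exact this

lemma det2_hasDerivAt {f g : ℝ → R2} {f' g' : R2} {s : ℝ}
    (hf : HasDerivAt f f' s) (hg : HasDerivAt g g' s) :
    HasDerivAt (fun s => det2 (f s) (g s)) (det2 f' (g s) + det2 (f s) g') s := by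
  have h := (((hasDerivAt_apply hf 0).mul (hasDerivAt_apply hg 1)).sub
    ((hasDerivAt_apply hf 1).mul (hasDerivAt_apply hg 0)))
  simp only [det2]
  exact h.congr_deriv (by ring)

/-- the Second Theorem of Dupin on the plane. -/
theorem stmt0
    (γ : ℝ → R2) (L : ℝ) (hL : 0 < L)
    (hγ : ContDiff ℝ 2 γ)
    (hper : ∀ s, γ (s + L) = γ s)
    (hreg : ∀ s, deriv γ s ≠ 0)
    (hinj : Set.InjOn γ (Set.Ico 0 L))
    (hor : 0 < ∫ s in (0:ℝ)..L, det2 (γ s) (deriv γ s))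
    (K : Set R2) (hKconv : Convex ℝ K) (hKcomp : IsCompact K)
    (hKint : (interior K).Nonempty) (hKbd : frontier K = Set.range γ)
    (δ : ℝ) (hδ0 : 0 < δ) (hδK : δ < (volume K).toReal)
    (t : ℝ → ℝ) (ht : ContDiff ℝ 1 t)
    (htrange : ∀ s, s < t s ∧ t s < s + L)
    (hA : ∀ s, (1/2) * ∫ u in s..t s, det2 (γ u - γ s) (deriv γ u) = δ)
    (hc1 : ∀ s, det2 (γ (t s) - γ s) (deriv γ s) ≠ 0)
    (hc2 : ∀ s, det2 (γ (t s) - γ s) (deriv γ (t s)) ≠ 0) :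
    ∀ s : ℝ,
      HasDerivAt t
        (-(det2 (γ (t s) - γ s) (deriv γ s)) / det2 (γ (t s) - γ s) (deriv γ (t s))) s ∧
      HasDerivAt (flotCurve γ t)
        ((det2 (deriv γ s) (deriv γ (t s)) /
            (2 * det2 (γ (t s) - γ s) (deriv γ (t s)))) • (γ (t s) - γ s)) s ∧
      (det2 (deriv γ s) (deriv γ (t s)) ≠ 0 →
        ∃ a : ℝ, a ≠ 0 ∧ deriv (flotCurve γ t) s = a • (γ (t s) - γ s)) := by
  have hγdiff : Differentiable ℝ γ := hγ.differentiable two_ne_zero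
  have hγ'cont : Continuous (deriv γ) := by
    have h2 : ContDiff ℝ ((1:ℕ∞)+1) γ := by norm_cast
    rw [contDiff_succ_iff_deriv] at h2
    exact h2.2.2.continuous
  have hγD : ∀ s, HasDerivAt γ (deriv γ s) s := fun s => (hγdiff s).hasDerivAt
  have htdiff : Differentiable ℝ t := ht.differentiable one_ne_zero
  have hcont0 : ∀ i : Fin 2, Continuous fun u => γ u i := fun i =>
    ((EuclideanSpace.proj (𝕜 := ℝ) i).continuous).comp hγ.continuous
  have hcont1 : ∀ i : Fin 2, Continuous fun u => deriv γ u i := fun i =>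
    ((EuclideanSpace.proj (𝕜 := ℝ) i).continuous).comp hγ'cont
  set g : ℝ → ℝ := fun u => det2 (γ u) (deriv γ u) with hgdef
  have hgcont : Continuous g := ((hcont0 0).mul (hcont1 1)).sub ((hcont0 1).mul (hcont1 0))
  set G : ℝ → ℝ := fun x => ∫ u in (0:ℝ)..x, g u with hGdef
  have hGD : ∀ x, HasDerivAt G (g x) x := fun x => (hgcont.integral_hasStrictDerivAt 0 x).hasDerivAt
  -- key identity: the constant-area condition rewritten through G
  have key : ∀ s, G (t s) - G s - det2 (γ s) (γ (t s) - γ s) = 2 * δ := by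
    intro s
    have hFTC : ∀ i : Fin 2, (∫ u in s..t s, deriv γ u i) = γ (t s) i - γ s i := fun i =>
      intervalIntegral.integral_eq_sub_of_hasDerivAt (fun u _ => hasDerivAt_apply (hγD u) i)
        ((hcont1 i).intervalIntegrable _ _)
    have hfixcont : Continuous fun u => det2 (γ s) (deriv γ u) :=
      ((continuous_const.mul (hcont1 1)).sub (continuous_const.mul (hcont1 0)))
    have hsplit : (∫ u in s..t s, det2 (γ u - γ s) (deriv γ u))
        = (∫ u in s..t s, g u) - ∫ u in s..t s, det2 (γ s) (deriv γ u) := by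
      rw [← intervalIntegral.integral_sub (hgcont.intervalIntegrable _ _)
        (hfixcont.intervalIntegrable _ _)]
      apply intervalIntegral.integral_congr
      intro u _
      simp only [det2, hgdef, PiLp.sub_apply]
      ring
    have hGdiff : (∫ u in s..t s, g u) = G (t s) - G s := by
      rw [hGdef]
      exact (intervalIntegral.integral_interval_sub_left (hgcont.intervalIntegrable _ _)
        (hgcont.intervalIntegrable _ _)).symm
    have hfix : (∫ u in s..t s, det2 (γ s) (deriv γ u)) = det2 (γ s) (γ (t s) - γ s) := by
      simp only [det2]
      rw [intervalIntegral.integral_sub (f := fun u => γ s 0 * deriv γ u 1) (g := fun u => γ s 1 * deriv γ u 0) ((continuous_const.mul (hcont1 1)).intervalIntegrable _ _)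
        ((continuous_const.mul (hcont1 0)).intervalIntegrable _ _),
        intervalIntegral.integral_const_mul, intervalIntegral.integral_const_mul, hFTC 0, hFTC 1]
      simp [PiLp.sub_apply]
    have := hA s
    rw [hsplit, hGdiff, hfix] at this
    linarith
  intro s
  have hT : HasDerivAt t (deriv t s) s := (htdiff s).hasDerivAt
  set T := deriv t s with hTdef
  have hγt : HasDerivAt (fun s => γ (t s)) (T • deriv γ (t s)) s := (hγD (t s)).scomp s hT
  have hGt : HasDerivAt (fun s => G (t s)) (T • g (t s)) s := (hGD (t s)).scomp s hT
  have hH : HasDerivAt (fun s => G (t s) - G s - det2 (γ s) (γ (t s) - γ s))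
      (T • g (t s) - g s -
        (det2 (deriv γ s) (γ (t s) - γ s) + det2 (γ s) (T • deriv γ (t s) - deriv γ s))) s :=
    (hGt.sub (hGD s)).sub (det2_hasDerivAt (hγD s) (hγt.sub (hγD s)))
  have hzero : T • g (t s) - g s -
      (det2 (deriv γ s) (γ (t s) - γ s) + det2 (γ s) (T • deriv γ (t s) - deriv γ s)) = 0 := by
    have hconst : HasDerivAt (fun s => G (t s) - G s - det2 (γ s) (γ (t s) - γ s)) 0 s := by
      have hfun : (fun s => G (t s) - G s - det2 (γ s) (γ (t s) - γ s)) = fun _ => 2 * δ :=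
        funext key
      rw [hfun]; exact hasDerivAt_const s _
    exact hH.unique hconst
  have h2 := hc2 s
  have hTD : T * det2 (γ (t s) - γ s) (deriv γ (t s)) + det2 (γ (t s) - γ s) (deriv γ s) = 0 := by
    simp only [det2, hgdef, PiLp.sub_apply, PiLp.smul_apply, smul_eq_mul] at hzero ⊢
    linarith [hzero]
  have hTval : T = -(det2 (γ (t s) - γ s) (deriv γ s)) / det2 (γ (t s) - γ s) (deriv γ (t s)) := by
    field_simp
    linarith [hTD]
  refine ⟨hTval ▸ hT, ?_, ?_⟩
  · have hflot : HasDerivAt (flotCurve γ t) (((1:ℝ)/2) • (deriv γ s + T • deriv γ (t s))) s := by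
      unfold flotCurve
      exact ((hγD s).add hγt).const_smul ((1:ℝ)/2)
    have heq : ((1:ℝ)/2) • (deriv γ s + T • deriv γ (t s)) =
        (det2 (deriv γ s) (deriv γ (t s)) /
          (2 * det2 (γ (t s) - γ s) (deriv γ (t s)))) • (γ (t s) - γ s) := by
      ext i
      have hTv := hTval
      simp only [det2, PiLp.sub_apply] at h2 hTv ⊢
      fin_cases i <;>
        · simp only [PiLp.smul_apply, PiLp.add_apply, PiLp.sub_apply, smul_eq_mul, hTv, Fin.zero_eta, Fin.mk_one, Fin.isValue]
          field_simp
          ring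
    rw [← heq]; exact hflot
  · intro hnp
    refine ⟨det2 (deriv γ s) (deriv γ (t s)) /
      (2 * det2 (γ (t s) - γ s) (deriv γ (t s))), div_ne_zero hnp (by simpa using h2), ?_⟩
    have hflot : HasDerivAt (flotCurve γ t) (((1:ℝ)/2) • (deriv γ s + T • deriv γ (t s))) s := by
      unfold flotCurve
      exact ((hγD s).add hγt).const_smul ((1:ℝ)/2)
    have heq : ((1:ℝ)/2) • (deriv γ s + T • deriv γ (t s)) =
        (det2 (deriv γ s) (deriv γ (t s)) /
          (2 * det2 (γ (t s) - γ s) (deriv γ (t s)))) • (γ (t s) - γ s) := by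
      ext i
      have hTv := hTval
      simp only [det2, PiLp.sub_apply] at h2 hTv ⊢
      fin_cases i <;>
        · simp only [PiLp.smul_apply, PiLp.add_apply, PiLp.sub_apply, smul_eq_mul, hTv, Fin.zero_eta, Fin.mk_one, Fin.isValue]
          field_simp
          ring
    rw [hflot.deriv]
    exact heq
end
end

section
/- Under the flotation setup, the buoyancy (centroid) curve r₂ is differentiable with r₂'(s) = −(1/(6δ))·det(c(s), γ'(s)) · c(s) for every s. In particular, r₂ is a regular parametrization and its tangent vector at r₂(s) is parallel to the chord of flotation c(s) (the First Theorem of Dupin on the plane). -/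
open Real MeasureTheory intervalIntegral

noncomputable section

namespace DupinAux

/-- FTC primitive derivative for continuous functions. -/
lemma primitive_hasDerivAt {E : Type*} [NormedAddCommGroup E] [NormedSpace ℝ E]
    [CompleteSpace E] {f : ℝ → E} (hf : Continuous f) (x : ℝ) :
    HasDerivAt (fun y => ∫ u in (0:ℝ)..y, f u) (f x) x :=
  intervalIntegral.integral_hasDerivAt_right (hf.intervalIntegrable _ _)
    hf.stronglyMeasurable.stronglyMeasurableAtFilter hf.continuousAt

lemma comp_continuous {f : ℝ → R2} (hf : Continuous f) (i : Fin 2) :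
    Continuous fun u => f u i :=
  (EuclideanSpace.proj (i : Fin 2) (𝕜 := ℝ)).continuous.comp hf

lemma comp_hasDerivAt {f : ℝ → R2} {f' : R2} {x : ℝ} (hf : HasDerivAt f f' x) (i : Fin 2) :
    HasDerivAt (fun u => f u i) (f' i) x := by
  have := (EuclideanSpace.proj (i : Fin 2) (𝕜 := ℝ)).hasFDerivAt.comp_hasDerivAt x hf
  exact this

lemma integral_comp {f : ℝ → R2} (hf : Continuous f) (a b : ℝ) (i : Fin 2) :
    (∫ u in a..b, f u) i = ∫ u in a..b, f u i := by
  have := (EuclideanSpace.proj (i : Fin 2) (𝕜 := ℝ)).intervalIntegral_comp_comm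
    (hf.intervalIntegrable (μ := volume) a b)
  simpa using this.symm

variable (γ : ℝ → R2)

def pf (u : ℝ) : ℝ := det2 (γ u) (deriv γ u)
def Pv (x : ℝ) : R2 := ∫ u in (0:ℝ)..x, pf γ u • γ u
def Qf (x : ℝ) : ℝ := ∫ u in (0:ℝ)..x, pf γ u
def Rv (x : ℝ) : R2 := ∫ u in (0:ℝ)..x, (deriv γ u 1) • γ u
def Sv (x : ℝ) : R2 := ∫ u in (0:ℝ)..x, (deriv γ u 0) • γ u

variable {γ}

section
variable (hγ : ContDiff ℝ 2 γ)
include hγ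

lemma cont : Continuous γ := hγ.continuous
lemma cont' : Continuous (deriv γ) := hγ.continuous_deriv one_le_two
lemma conti (i : Fin 2) : Continuous fun u => γ u i := comp_continuous hγ.continuous i
lemma conti' (i : Fin 2) : Continuous fun u => deriv γ u i :=
  comp_continuous (cont' hγ) i
lemma cont_pf : Continuous (pf γ) := by
  have : (pf γ) = fun u => γ u 0 * deriv γ u 1 - γ u 1 * deriv γ u 0 := rfl
  rw [this]
  exact ((conti hγ 0).mul (conti' hγ 1)).sub ((conti hγ 1).mul (conti' hγ 0))

lemma hasDerivAt_γ (x : ℝ) : HasDerivAt γ (deriv γ x) x :=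
  ((hγ.differentiable (by norm_num)) x).hasDerivAt

lemma hasDerivAt_γi (i : Fin 2) (x : ℝ) :
    HasDerivAt (fun u => γ u i) (deriv γ x i) x :=
  comp_hasDerivAt (hasDerivAt_γ hγ x) i

/-- FTC: the integral of a coordinate of the derivative. -/
lemma integral_deriv_i (i : Fin 2) (s T : ℝ) :
    ∫ u in s..T, deriv γ u i = γ T i - γ s i :=
  intervalIntegral.integral_eq_sub_of_hasDerivAt (fun u _ => hasDerivAt_γi hγ i u)
    ((conti' hγ i).intervalIntegrable _ _)

end

section
variable (hγ : ContDiff ℝ 2 γ)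
include hγ

/-- Decomposition of the area integral. -/
lemma area_decomp (s T : ℝ) :
    (∫ u in s..T, det2 (γ u - γ s) (deriv γ u)) =
      (Qf γ T - Qf γ s)
        - (γ s 0 * (γ T 1 - γ s 1) - γ s 1 * (γ T 0 - γ s 0)) := by
  have h1 : (∫ u in s..T, det2 (γ u - γ s) (deriv γ u)) =
      ∫ u in s..T, (pf γ u - (γ s 0 * deriv γ u 1 - γ s 1 * deriv γ u 0)) := by
    apply intervalIntegral.integral_congr
    intro u _
    simp [det2, pf, PiLp.sub_apply]; ring
  rw [h1, intervalIntegral.integral_sub ((cont_pf hγ).intervalIntegrable _ _)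
    (((continuous_const.fun_mul (conti' hγ 1)).fun_sub (continuous_const.fun_mul (conti' hγ 0))).intervalIntegrable _ _),
    intervalIntegral.integral_sub ((continuous_const.fun_mul (conti' hγ 1)).intervalIntegrable _ _)
    ((continuous_const.fun_mul (conti' hγ 0)).intervalIntegrable _ _),
    intervalIntegral.integral_const_mul, intervalIntegral.integral_const_mul,
    integral_deriv_i hγ 0, integral_deriv_i hγ 1]
  have hQ : Qf γ T - Qf γ s = ∫ u in s..T, pf γ u :=
    integral_interval_sub_left ((cont_pf hγ).intervalIntegrable _ _)
      ((cont_pf hγ).intervalIntegrable _ _)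
  rw [hQ]

end

section
variable (hγ : ContDiff ℝ 2 γ)
include hγ

/-- Decomposition of the moment integral. -/
lemma vec_decomp (s T : ℝ) :
    (∫ u in s..T, det2 (γ u - γ s) (deriv γ u) • (γ u - γ s)) =
      (Pv γ T - Pv γ s) - (Qf γ T - Qf γ s) • γ s - (γ s 0) • (Rv γ T - Rv γ s)
        + (γ s 1) • (Sv γ T - Sv γ s)
        + (γ s 0 * (γ T 1 - γ s 1) - γ s 1 * (γ T 0 - γ s 0)) • γ s := by
  have c1 : Continuous fun u => pf γ u • γ u := (cont_pf hγ).smul (cont hγ)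
  have c2 : Continuous fun u => pf γ u • γ s := (cont_pf hγ).smul continuous_const
  have c3 : Continuous fun u => (γ s 0) • ((deriv γ u 1) • γ u) :=
    continuous_const.fun_smul ((conti' hγ 1).fun_smul (cont hγ))
  have c4 : Continuous fun u => (γ s 1) • ((deriv γ u 0) • γ u) :=
    continuous_const.fun_smul ((conti' hγ 0).fun_smul (cont hγ))
  have c5' : Continuous fun u => γ s 0 * deriv γ u 1 - γ s 1 * deriv γ u 0 :=
    (continuous_const.mul (conti' hγ 1)).sub (continuous_const.mul (conti' hγ 0))
  have c5 : Continuous fun u => (γ s 0 * deriv γ u 1 - γ s 1 * deriv γ u 0) • γ s :=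
    c5'.smul continuous_const
  have h1 : (∫ u in s..T, det2 (γ u - γ s) (deriv γ u) • (γ u - γ s)) =
      ∫ u in s..T, (pf γ u • γ u - pf γ u • γ s - (γ s 0) • ((deriv γ u 1) • γ u)
        + (γ s 1) • ((deriv γ u 0) • γ u)
        + (γ s 0 * deriv γ u 1 - γ s 1 * deriv γ u 0) • γ s) := by
    apply intervalIntegral.integral_congr
    intro u _
    have hcoef : det2 (γ u - γ s) (deriv γ u)
        = pf γ u - (γ s 0 * deriv γ u 1 - γ s 1 * deriv γ u 0) := by
      simp [det2, pf, PiLp.sub_apply]; ring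
    show det2 (γ u - γ s) (deriv γ u) • (γ u - γ s) = _
    rw [hcoef]
    show _ = pf γ u • γ u - pf γ u • γ s - γ s 0 • deriv γ u 1 • γ u
      + γ s 1 • deriv γ u 0 • γ u + (γ s 0 * deriv γ u 1 - γ s 1 * deriv γ u 0) • γ s
    module
  rw [h1,
    intervalIntegral.integral_add
      ((((c1.fun_sub c2).fun_sub c3).fun_add c4).intervalIntegrable _ _) (c5.intervalIntegrable _ _),
    intervalIntegral.integral_add
      (((c1.fun_sub c2).fun_sub c3).intervalIntegrable _ _) (c4.intervalIntegrable _ _),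
    intervalIntegral.integral_sub
      ((c1.fun_sub c2).intervalIntegrable _ _) (c3.intervalIntegrable _ _),
    intervalIntegral.integral_sub (c1.intervalIntegrable _ _) (c2.intervalIntegrable _ _)]
  have e1 : Pv γ T - Pv γ s = ∫ u in s..T, pf γ u • γ u :=
    integral_interval_sub_left (c1.intervalIntegrable _ _) (c1.intervalIntegrable _ _)
  have e2 : (∫ u in s..T, pf γ u • γ s) = (Qf γ T - Qf γ s) • γ s := by
    rw [intervalIntegral.integral_smul_const]
    congr 1
    exact (integral_interval_sub_left ((cont_pf hγ).intervalIntegrable _ _)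
      ((cont_pf hγ).intervalIntegrable _ _)).symm
  have e3 : (∫ u in s..T, (γ s 0) • ((deriv γ u 1) • γ u))
      = (γ s 0) • (Rv γ T - Rv γ s) := by
    rw [intervalIntegral.integral_smul]
    congr 1
    exact (integral_interval_sub_left (((conti' hγ 1).smul (cont hγ)).intervalIntegrable _ _)
      (((conti' hγ 1).smul (cont hγ)).intervalIntegrable _ _)).symm
  have e4 : (∫ u in s..T, (γ s 1) • ((deriv γ u 0) • γ u))
      = (γ s 1) • (Sv γ T - Sv γ s) := by
    rw [intervalIntegral.integral_smul]
    congr 1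
    exact (integral_interval_sub_left (((conti' hγ 0).smul (cont hγ)).intervalIntegrable _ _)
      (((conti' hγ 0).smul (cont hγ)).intervalIntegrable _ _)).symm
  have e5 : (∫ u in s..T, (γ s 0 * deriv γ u 1 - γ s 1 * deriv γ u 0) • γ s)
      = (γ s 0 * (γ T 1 - γ s 1) - γ s 1 * (γ T 0 - γ s 0)) • γ s := by
    rw [intervalIntegral.integral_smul_const]
    congr 1
    rw [intervalIntegral.integral_sub
        ((continuous_const.fun_mul (conti' hγ 1)).intervalIntegrable _ _)
        ((continuous_const.fun_mul (conti' hγ 0)).intervalIntegrable _ _),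
      intervalIntegral.integral_const_mul, intervalIntegral.integral_const_mul,
      integral_deriv_i hγ 0, integral_deriv_i hγ 1]
  rw [e1, e2, e3, e4, e5]

end

section
variable (hγ : ContDiff ℝ 2 γ)
include hγ

lemma hasDerivAt_Pv (x : ℝ) : HasDerivAt (Pv γ) (pf γ x • γ x) x :=
  primitive_hasDerivAt ((cont_pf hγ).smul (cont hγ)) x

lemma hasDerivAt_Qf (x : ℝ) : HasDerivAt (Qf γ) (pf γ x) x :=
  primitive_hasDerivAt (cont_pf hγ) x

lemma hasDerivAt_Rv (x : ℝ) : HasDerivAt (Rv γ) (deriv γ x 1 • γ x) x :=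
  primitive_hasDerivAt ((conti' hγ 1).smul (cont hγ)) x

lemma hasDerivAt_Sv (x : ℝ) : HasDerivAt (Sv γ) (deriv γ x 0 • γ x) x :=
  primitive_hasDerivAt ((conti' hγ 0).smul (cont hγ)) x

variable {t : ℝ → ℝ} (ht : ContDiff ℝ 1 t)
include ht

/-- Derivative of the closed-form moment expression. -/
lemma hasDerivAt_big (s : ℝ) :
    HasDerivAt (fun σ => (Pv γ (t σ) - Pv γ σ) - (Qf γ (t σ) - Qf γ σ) • γ σ
        - (γ σ 0) • (Rv γ (t σ) - Rv γ σ) + (γ σ 1) • (Sv γ (t σ) - Sv γ σ)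
        + (γ σ 0 * (γ (t σ) 1 - γ σ 1) - γ σ 1 * (γ (t σ) 0 - γ σ 0)) • γ σ)
      ((deriv t s • (pf γ (t s) • γ (t s)) - pf γ s • γ s)
        - ((Qf γ (t s) - Qf γ s) • deriv γ s + (pf γ (t s) * deriv t s - pf γ s) • γ s)
        - ((γ s 0) • (deriv t s • (deriv γ (t s) 1 • γ (t s)) - deriv γ s 1 • γ s)
            + (deriv γ s 0) • (Rv γ (t s) - Rv γ s))
        + ((γ s 1) • (deriv t s • (deriv γ (t s) 0 • γ (t s)) - deriv γ s 0 • γ s)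
            + (deriv γ s 1) • (Sv γ (t s) - Sv γ s))
        + ((γ s 0 * (γ (t s) 1 - γ s 1) - γ s 1 * (γ (t s) 0 - γ s 0)) • deriv γ s
            + (deriv γ s 0 * (γ (t s) 1 - γ s 1)
                + γ s 0 * (deriv γ (t s) 1 * deriv t s - deriv γ s 1)
              - (deriv γ s 1 * (γ (t s) 0 - γ s 0)
                + γ s 1 * (deriv γ (t s) 0 * deriv t s - deriv γ s 0))) • γ s)) s := by
  have hdt : HasDerivAt t (deriv t s) s := ((ht.differentiable one_ne_zero) s).hasDerivAt
  have hP : HasDerivAt (fun σ => Pv γ (t σ) - Pv γ σ)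
      (deriv t s • (pf γ (t s) • γ (t s)) - pf γ s • γ s) s :=
    ((hasDerivAt_Pv hγ (t s)).scomp s hdt).sub (hasDerivAt_Pv hγ s)
  have hQ : HasDerivAt (fun σ => (Qf γ (t σ) - Qf γ σ) • γ σ)
      ((Qf γ (t s) - Qf γ s) • deriv γ s + (pf γ (t s) * deriv t s - pf γ s) • γ s) s :=
    ((((hasDerivAt_Qf hγ (t s)).comp s hdt).sub (hasDerivAt_Qf hγ s)).smul
      (hasDerivAt_γ hγ s))
  have hR : HasDerivAt (fun σ => (γ σ 0) • (Rv γ (t σ) - Rv γ σ))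
      ((γ s 0) • (deriv t s • (deriv γ (t s) 1 • γ (t s)) - deriv γ s 1 • γ s)
        + (deriv γ s 0) • (Rv γ (t s) - Rv γ s)) s :=
    ((hasDerivAt_γi hγ 0 s).smul
      (((hasDerivAt_Rv hγ (t s)).scomp s hdt).sub (hasDerivAt_Rv hγ s)))
  have hS : HasDerivAt (fun σ => (γ σ 1) • (Sv γ (t σ) - Sv γ σ))
      ((γ s 1) • (deriv t s • (deriv γ (t s) 0 • γ (t s)) - deriv γ s 0 • γ s)
        + (deriv γ s 1) • (Sv γ (t s) - Sv γ s)) s :=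
    ((hasDerivAt_γi hγ 1 s).smul
      (((hasDerivAt_Sv hγ (t s)).scomp s hdt).sub (hasDerivAt_Sv hγ s)))
  have hκs : HasDerivAt
      (fun σ => γ σ 0 * (γ (t σ) 1 - γ σ 1) - γ σ 1 * (γ (t σ) 0 - γ σ 0))
      (deriv γ s 0 * (γ (t s) 1 - γ s 1)
        + γ s 0 * (deriv γ (t s) 1 * deriv t s - deriv γ s 1)
        - (deriv γ s 1 * (γ (t s) 0 - γ s 0)
        + γ s 1 * (deriv γ (t s) 0 * deriv t s - deriv γ s 0))) s :=
    (((hasDerivAt_γi hγ 0 s).mul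
        ((((hasDerivAt_γi hγ 1 (t s)).comp s hdt)).sub (hasDerivAt_γi hγ 1 s))).sub
      ((hasDerivAt_γi hγ 1 s).mul
        ((((hasDerivAt_γi hγ 0 (t s)).comp s hdt)).sub (hasDerivAt_γi hγ 0 s))))
  have hκ : HasDerivAt
      (fun σ => (γ σ 0 * (γ (t σ) 1 - γ σ 1) - γ σ 1 * (γ (t σ) 0 - γ σ 0)) • γ σ)
      ((γ s 0 * (γ (t s) 1 - γ s 1) - γ s 1 * (γ (t s) 0 - γ s 0)) • deriv γ s
        + (deriv γ s 0 * (γ (t s) 1 - γ s 1)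
            + γ s 0 * (deriv γ (t s) 1 * deriv t s - deriv γ s 1)
          - (deriv γ s 1 * (γ (t s) 0 - γ s 0)
            + γ s 1 * (deriv γ (t s) 0 * deriv t s - deriv γ s 0))) • γ s) s :=
    hκs.smul (hasDerivAt_γ hγ s)
  exact (((hP.sub hQ).sub hR).add hS).add hκ

/-- Derivative of the closed-form area expression. -/
lemma hasDerivAt_W (s : ℝ) :
    HasDerivAt (fun σ => Qf γ (t σ) - Qf γ σ
        - (γ σ 0 * (γ (t σ) 1 - γ σ 1) - γ σ 1 * (γ (t σ) 0 - γ σ 0)))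
      ((pf γ (t s) * deriv t s - pf γ s)
        - (deriv γ s 0 * (γ (t s) 1 - γ s 1)
            + γ s 0 * (deriv γ (t s) 1 * deriv t s - deriv γ s 1)
          - (deriv γ s 1 * (γ (t s) 0 - γ s 0)
            + γ s 1 * (deriv γ (t s) 0 * deriv t s - deriv γ s 0)))) s := by
  have hdt : HasDerivAt t (deriv t s) s := ((ht.differentiable one_ne_zero) s).hasDerivAt
  exact ((((hasDerivAt_Qf hγ (t s)).comp s hdt).sub (hasDerivAt_Qf hγ s)).sub
    ((((hasDerivAt_γi hγ 0 s).mul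
        ((((hasDerivAt_γi hγ 1 (t s)).comp s hdt)).sub (hasDerivAt_γi hγ 1 s))).sub
      ((hasDerivAt_γi hγ 1 s).mul
        ((((hasDerivAt_γi hγ 0 (t s)).comp s hdt)).sub (hasDerivAt_γi hγ 0 s))))))

end

section
variable (hγ : ContDiff ℝ 2 γ)
include hγ

lemma Rv_apply (x : ℝ) (i : Fin 2) :
    Rv γ x i = ∫ u in (0:ℝ)..x, deriv γ u 1 * γ u i := by
  rw [Rv, integral_comp ((conti' hγ 1).fun_smul (cont hγ)) 0 x i]
  simp only [PiLp.smul_apply, smul_eq_mul]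

lemma Sv_apply (x : ℝ) (i : Fin 2) :
    Sv γ x i = ∫ u in (0:ℝ)..x, deriv γ u 0 * γ u i := by
  rw [Sv, integral_comp ((conti' hγ 0).fun_smul (cont hγ)) 0 x i]
  simp only [PiLp.smul_apply, smul_eq_mul]

lemma Rv_sub (s T : ℝ) (i : Fin 2) :
    Rv γ T i - Rv γ s i = ∫ u in s..T, deriv γ u 1 * γ u i := by
  rw [Rv_apply hγ, Rv_apply hγ]
  exact integral_interval_sub_left
    (((conti' hγ 1).mul (conti hγ i)).intervalIntegrable _ _)
    (((conti' hγ 1).mul (conti hγ i)).intervalIntegrable _ _)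

lemma Sv_sub (s T : ℝ) (i : Fin 2) :
    Sv γ T i - Sv γ s i = ∫ u in s..T, deriv γ u 0 * γ u i := by
  rw [Sv_apply hγ, Sv_apply hγ]
  exact integral_interval_sub_left
    (((conti' hγ 0).mul (conti hγ i)).intervalIntegrable _ _)
    (((conti' hγ 0).mul (conti hγ i)).intervalIntegrable _ _)

lemma sum_constraint (s T : ℝ) :
    (Rv γ T 0 - Rv γ s 0) + (Sv γ T 1 - Sv γ s 1)
      = γ T 0 * γ T 1 - γ s 0 * γ s 1 := by
  rw [Rv_sub hγ, Sv_sub hγ,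
    ← intervalIntegral.integral_add
      (((conti' hγ 1).fun_mul (conti hγ 0)).intervalIntegrable _ _)
      (((conti' hγ 0).fun_mul (conti hγ 1)).intervalIntegrable _ _)]
  apply intervalIntegral.integral_eq_sub_of_hasDerivAt
  · intro u _
    have h := (hasDerivAt_γi hγ 0 u).mul (hasDerivAt_γi hγ 1 u)
    have he : deriv γ u 1 * γ u 0 + deriv γ u 0 * γ u 1
        = deriv γ u 0 * γ u 1 + γ u 0 * deriv γ u 1 := by ring
    rw [he]
    exact h
  · exact (((conti' hγ 1).mul (conti hγ 0)).add
      ((conti' hγ 0).mul (conti hγ 1))).intervalIntegrable _ _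

lemma diff_constraint (s T : ℝ) :
    (Rv γ T 0 - Rv γ s 0) - (Sv γ T 1 - Sv γ s 1) = Qf γ T - Qf γ s := by
  rw [Rv_sub hγ, Sv_sub hγ,
    ← intervalIntegral.integral_sub
      (((conti' hγ 1).fun_mul (conti hγ 0)).intervalIntegrable _ _)
      (((conti' hγ 0).fun_mul (conti hγ 1)).intervalIntegrable _ _)]
  have hQ : Qf γ T - Qf γ s = ∫ u in s..T, pf γ u :=
    integral_interval_sub_left ((cont_pf hγ).intervalIntegrable _ _)
      ((cont_pf hγ).intervalIntegrable _ _)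
  rw [hQ]
  apply intervalIntegral.integral_congr
  intro u _
  simp only [pf, det2]
  ring

lemma R1_constraint (s T : ℝ) :
    Rv γ T 1 - Rv γ s 1 = (γ T 1 * γ T 1 - γ s 1 * γ s 1) / 2 := by
  rw [Rv_sub hγ]
  have key : ∫ u in s..T, deriv γ u 1 * γ u 1
      = γ T 1 * γ T 1 / 2 - γ s 1 * γ s 1 / 2 := by
    apply intervalIntegral.integral_eq_sub_of_hasDerivAt (f := fun u => γ u 1 * γ u 1 / 2)
    · intro u _
      have h := ((hasDerivAt_γi hγ 1 u).mul (hasDerivAt_γi hγ 1 u)).div_const 2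
      have he : deriv γ u 1 * γ u 1
          = (deriv γ u 1 * γ u 1 + γ u 1 * deriv γ u 1) / 2 := by ring
      rw [he]
      exact h
    · exact ((conti' hγ 1).mul (conti hγ 1)).intervalIntegrable _ _
  rw [key]; ring

lemma S0_constraint (s T : ℝ) :
    Sv γ T 0 - Sv γ s 0 = (γ T 0 * γ T 0 - γ s 0 * γ s 0) / 2 := by
  rw [Sv_sub hγ]
  have key : ∫ u in s..T, deriv γ u 0 * γ u 0
      = γ T 0 * γ T 0 / 2 - γ s 0 * γ s 0 / 2 := by
    apply intervalIntegral.integral_eq_sub_of_hasDerivAt (f := fun u => γ u 0 * γ u 0 / 2)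
    · intro u _
      have h := ((hasDerivAt_γi hγ 0 u).mul (hasDerivAt_γi hγ 0 u)).div_const 2
      have he : deriv γ u 0 * γ u 0
          = (deriv γ u 0 * γ u 0 + γ u 0 * deriv γ u 0) / 2 := by ring
      rw [he]
      exact h
    · exact ((conti' hγ 0).mul (conti hγ 0)).intervalIntegrable _ _
  rw [key]; ring

end
end DupinAux

open DupinAux

/-- the First Theorem of Dupin on the plane. -/
theorem stmt2
    (γ : ℝ → R2) (L : ℝ) (hL : 0 < L)
    (hγ : ContDiff ℝ 2 γ)
    (hper : ∀ s, γ (s + L) = γ s)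
    (hreg : ∀ s, deriv γ s ≠ 0)
    (hinj : Set.InjOn γ (Set.Ico 0 L))
    (hor : 0 < ∫ s in (0:ℝ)..L, det2 (γ s) (deriv γ s))
    (K : Set R2) (hKconv : Convex ℝ K) (hKcomp : IsCompact K)
    (hKint : (interior K).Nonempty) (hKbd : frontier K = Set.range γ)
    (δ : ℝ) (hδ0 : 0 < δ) (hδK : δ < (volume K).toReal)
    (t : ℝ → ℝ) (ht : ContDiff ℝ 1 t)
    (htrange : ∀ s, s < t s ∧ t s < s + L)
    (hA : ∀ s, (1/2) * ∫ u in s..t s, det2 (γ u - γ s) (deriv γ u) = δ)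
    (hc1 : ∀ s, det2 (γ (t s) - γ s) (deriv γ s) ≠ 0)
    (hc2 : ∀ s, det2 (γ (t s) - γ s) (deriv γ (t s)) ≠ 0) :
    ∀ s : ℝ,
      HasDerivAt (buoyCurve γ t δ)
        ((-(1/(6*δ)) * det2 (γ (t s) - γ s) (deriv γ s)) • (γ (t s) - γ s)) s ∧
      deriv (buoyCurve γ t δ) s ≠ 0 ∧
      ∃ a : ℝ, a ≠ 0 ∧ deriv (buoyCurve γ t δ) s = a • (γ (t s) - γ s) := by
  intro s
  have hbuoy : buoyCurve γ t δ = fun σ =>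
      γ σ + (1/(3*δ)) • ((Pv γ (t σ) - Pv γ σ)
        - (Qf γ (t σ) - Qf γ σ) • γ σ
        - (γ σ 0) • (Rv γ (t σ) - Rv γ σ)
        + (γ σ 1) • (Sv γ (t σ) - Sv γ σ)
        + (γ σ 0 * (γ (t σ) 1 - γ σ 1) - γ σ 1 * (γ (t σ) 0 - γ σ 0)) • γ σ) := by
    funext σ
    rw [buoyCurve, vec_decomp hγ σ (t σ)]
  have hAois : ∀ σ, Qf γ (t σ) - Qf γ σ
      - (γ σ 0 * (γ (t σ) 1 - γ σ 1) - γ σ 1 * (γ (t σ) 0 - γ σ 0)) = 2*δ := by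
    intro σ
    have h1 := hA σ
    have h2 := area_decomp hγ σ (t σ)
    linarith
  have hWd := hasDerivAt_W hγ ht s
  have hWc : (fun σ => Qf γ (t σ) - Qf γ σ
      - (γ σ 0 * (γ (t σ) 1 - γ σ 1) - γ σ 1 * (γ (t σ) 0 - γ σ 0)))
      = fun _ => 2*δ := funext hAois
  rw [hWc] at hWd
  have hW0 : (pf γ (t s) * deriv t s - pf γ s)
      - (deriv γ s 0 * (γ (t s) 1 - γ s 1)
          + γ s 0 * (deriv γ (t s) 1 * deriv t s - deriv γ s 1)
        - (deriv γ s 1 * (γ (t s) 0 - γ s 0)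
          + γ s 1 * (deriv γ (t s) 0 * deriv t s - deriv γ s 0))) = 0 :=
    hWd.unique (hasDerivAt_const s (2*δ))
  have hQval : Qf γ (t s) - Qf γ s
      = 2*δ + (γ s 0 * (γ (t s) 1 - γ s 1) - γ s 1 * (γ (t s) 0 - γ s 0)) := by
    have := hAois s; linarith
  have hsum := sum_constraint hγ s (t s)
  have hdiff := diff_constraint hγ s (t s)
  have hR1 := R1_constraint hγ s (t s)
  have hS0 := S0_constraint hγ s (t s)
  have hδne : δ ≠ 0 := ne_of_gt hδ0
  have hmain : HasDerivAt (buoyCurve γ t δ)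
      ((-(1/(6*δ)) * det2 (γ (t s) - γ s) (deriv γ s)) • (γ (t s) - γ s)) s := by
    rw [hbuoy]
    have h3 := (hasDerivAt_γ hγ s).add ((hasDerivAt_big hγ ht s).const_smul ((1:ℝ)/(3*δ)))
    refine h3.congr_deriv ?_
    symm
    ext i
    fin_cases i
    · simp only [det2, pf, PiLp.add_apply, PiLp.sub_apply, PiLp.smul_apply, smul_eq_mul,
        Fin.isValue, Fin.mk_zero, Fin.mk_one]
      simp only [pf, det2] at hW0
      linear_combination (norm := (field_simp; ring)) ((deriv γ s 0)/(2*δ)) * hQval + ((deriv γ s 0)/(6*δ)) * hsum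
        + ((deriv γ s 0)/(6*δ)) * hdiff + (-(deriv γ s 1)/(3*δ)) * hS0
        + (-(1/(3*δ)) * (γ (t s) 0 - γ s 0)) * hW0
    · simp only [det2, pf, PiLp.add_apply, PiLp.sub_apply, PiLp.smul_apply, smul_eq_mul,
        Fin.isValue, Fin.mk_zero, Fin.mk_one]
      simp only [pf, det2] at hW0
      linear_combination (norm := (field_simp; ring)) ((deriv γ s 1)/(2*δ)) * hQval + (-(deriv γ s 1)/(6*δ)) * hsum
        + ((deriv γ s 1)/(6*δ)) * hdiff + ((deriv γ s 0)/(3*δ)) * hR1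
        + (-(1/(3*δ)) * (γ (t s) 1 - γ s 1)) * hW0
  have hane : (-(1/(6*δ)) * det2 (γ (t s) - γ s) (deriv γ s)) ≠ 0 :=
    mul_ne_zero (neg_ne_zero.mpr (by positivity)) (hc1 s)
  have hcne : γ (t s) - γ s ≠ 0 := by
    intro h
    exact hc1 s (by rw [h]; simp [det2])
  refine ⟨hmain, ?_, ?_⟩
  · rw [hmain.deriv]
    exact smul_ne_zero hane hcne
  · exact ⟨-(1/(6*δ)) * det2 (γ (t s) - γ s) (deriv γ s), hane, hmain.deriv⟩
end
end

section
/- Under the flotation setup, at every s with det(γ'(s), γ'(t(s))) ≠ 0 one has r₂'(s) = ( ‖c(s)‖³ / (12δ) ) · r₁'(s), where ‖c(s)‖³ = −4·det(c(s), γ'(s))·det(c(s), γ'(t(s))) / det(γ'(s), γ'(t(s))) is the cubed affine distance between the endpoints of the chord of flotation. -/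
open Real MeasureTheory intervalIntegral

noncomputable section

/-- `r₂' = (‖c‖³/(12δ))·r₁'`. -/
theorem stmt7
    (γ : ℝ → R2) (L : ℝ) (hL : 0 < L)
    (hγ : ContDiff ℝ 2 γ)
    (hper : ∀ s, γ (s + L) = γ s)
    (hreg : ∀ s, deriv γ s ≠ 0)
    (hinj : Set.InjOn γ (Set.Ico 0 L))
    (hor : 0 < ∫ s in (0:ℝ)..L, det2 (γ s) (deriv γ s))
    (K : Set R2) (hKconv : Convex ℝ K) (hKcomp : IsCompact K)
    (hKint : (interior K).Nonempty) (hKbd : frontier K = Set.range γ)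
    (δ : ℝ) (hδ0 : 0 < δ) (hδK : δ < (volume K).toReal)
    (t : ℝ → ℝ) (ht : ContDiff ℝ 1 t)
    (htrange : ∀ s, s < t s ∧ t s < s + L)
    (hA : ∀ s, (1/2) * ∫ u in s..t s, det2 (γ u - γ s) (deriv γ u) = δ)
    (hc1 : ∀ s, det2 (γ (t s) - γ s) (deriv γ s) ≠ 0)
    (hc2 : ∀ s, det2 (γ (t s) - γ s) (deriv γ (t s)) ≠ 0) :
    ∀ s : ℝ, det2 (deriv γ s) (deriv γ (t s)) ≠ 0 →
      deriv (buoyCurve γ t δ) s =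
        ((-4 * det2 (γ (t s) - γ s) (deriv γ s) * det2 (γ (t s) - γ s) (deriv γ (t s)) /
            det2 (deriv γ s) (deriv γ (t s))) / (12 * δ)) • deriv (flotCurve γ t) s := by
  -- basic differentiability facts
  have hγd : Differentiable ℝ γ := hγ.differentiable two_ne_zero
  have hγc : Continuous γ := hγ.continuous
  have hgc : Continuous (deriv γ) := hγ.continuous_deriv one_le_two
  have hγ' : ∀ x, HasDerivAt γ (deriv γ x) x := fun x => (hγd x).hasDerivAt
  have hγ'i : ∀ (i : Fin 2) x, HasDerivAt (fun x => γ x i) (deriv γ x i) x := fun i x =>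
    (EuclideanSpace.proj (𝕜 := ℝ) i).hasFDerivAt.comp_hasDerivAt x (hγ' x)
  have ht' : ∀ x, HasDerivAt t (deriv t x) x := fun x => ((ht.differentiable one_ne_zero) x).hasDerivAt
  -- antiderivatives
  set G : ℝ → ℝ := fun x => ∫ u in (0:ℝ)..x, det2 (γ u) (deriv γ u) with hGdef
  set H : ℝ → R2 := fun x => ∫ u in (0:ℝ)..x, det2 (γ u) (deriv γ u) • γ u with hHdef
  set P : ℝ → R2 := fun x => ∫ u in (0:ℝ)..x, (deriv γ u 1) • γ u with hPdef
  set Q : ℝ → R2 := fun x => ∫ u in (0:ℝ)..x, (deriv γ u 0) • γ u with hQdef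
  have cG : Continuous (fun u => det2 (γ u) (deriv γ u)) := by simp only [det2]; fun_prop
  have cH : Continuous (fun u => det2 (γ u) (deriv γ u) • γ u) := cG.smul hγc
  have cP : Continuous (fun u => (deriv γ u 1) • γ u) := by fun_prop
  have cQ : Continuous (fun u => (deriv γ u 0) • γ u) := by fun_prop
  have hG' : ∀ x, HasDerivAt G (det2 (γ x) (deriv γ x)) x := fun x =>
    (cG.integral_hasStrictDerivAt 0 x).hasDerivAt
  have hH' : ∀ x, HasDerivAt H (det2 (γ x) (deriv γ x) • γ x) x := fun x =>
    (cH.integral_hasStrictDerivAt 0 x).hasDerivAt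
  have hP' : ∀ x, HasDerivAt P ((deriv γ x 1) • γ x) x := fun x =>
    (cP.integral_hasStrictDerivAt 0 x).hasDerivAt
  have hQ' : ∀ x, HasDerivAt Q ((deriv γ x 0) • γ x) x := fun x =>
    (cQ.integral_hasStrictDerivAt 0 x).hasDerivAt
  have cI1 : ∀ σ, Continuous (fun u => det2 (γ u - γ σ) (deriv γ u)) := by
    intro σ; simp only [det2]; fun_prop
  -- the scalar area identity, rewritten via antiderivatives
  have hGd : ∀ σ, G (t σ) - G σ - det2 (γ σ) (γ (t σ)) = 2*δ := by
    intro σ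
    have hF : ∀ u ∈ Set.uIcc σ (t σ), HasDerivAt
        (fun u => G u - (γ σ 0 * γ u 1 - γ σ 1 * γ u 0))
        (det2 (γ u - γ σ) (deriv γ u)) u := by
      intro u _
      have h := (hG' u).sub (((hγ'i 1 u).const_mul (γ σ 0)).sub ((hγ'i 0 u).const_mul (γ σ 1)))
      refine h.congr_deriv ?_
      simp [det2]
      ring
    have hint := integral_eq_sub_of_hasDerivAt hF ((cI1 σ).intervalIntegrable _ _)
    have hval := hA σ
    rw [hint] at hval
    simp only [det2] at hval ⊢
    linarith
  -- the buoyancy curve rewritten via antiderivatives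
  have hbeq : ∀ σ, buoyCurve γ t δ σ = γ σ + (1/(3*δ)) •
      (H (t σ) - H σ - (G (t σ) - G σ) • γ σ - (γ σ 0) • (P (t σ) - P σ)
        + (γ σ 1) • (Q (t σ) - Q σ) + (γ σ 0 * γ (t σ) 1 - γ σ 1 * γ (t σ) 0) • γ σ) := by
    intro σ
    have hF : ∀ u ∈ Set.uIcc σ (t σ), HasDerivAt
        (fun u => H u - G u • γ σ - (γ σ 0) • P u + (γ σ 1) • Q u
          + (γ σ 0 * γ u 1 - γ σ 1 * γ u 0) • γ σ)
        (det2 (γ u - γ σ) (deriv γ u) • (γ u - γ σ)) u := by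
      intro u _
      have h := ((((hH' u).sub ((hG' u).smul_const (γ σ))).sub
          ((hP' u).const_smul (γ σ 0))).add ((hQ' u).const_smul (γ σ 1))).add
          ((((hγ'i 1 u).const_mul (γ σ 0)).sub ((hγ'i 0 u).const_mul (γ σ 1))).smul_const (γ σ))
      refine h.congr_deriv ?_
      ext i; fin_cases i <;> · simp only [det2, PiLp.add_apply, PiLp.sub_apply, PiLp.smul_apply, smul_eq_mul, Fin.mk_zero, Fin.mk_one]; ring
    have hcont : Continuous fun u => det2 (γ u - γ σ) (deriv γ u) • (γ u - γ σ) :=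
      (cI1 σ).smul (hγc.sub continuous_const)
    have hint := integral_eq_sub_of_hasDerivAt hF (hcont.intervalIntegrable _ _)
    unfold buoyCurve
    rw [hint]
    ext i
    fin_cases i <;>
      · simp only [PiLp.add_apply, PiLp.sub_apply, PiLp.smul_apply, smul_eq_mul]
        ring
  -- now fix s
  intro s hd
  set T := deriv t s with hTdef
  -- derivative of the chord condition: T * det2 c q = - det2 c p
  have hTc : T * det2 (γ (t s) - γ s) (deriv γ (t s)) = -det2 (γ (t s) - γ s) (deriv γ s) := by
    have hAf : (fun σ => (1/2) * (G (t σ) - G σ - (γ σ 0 * γ (t σ) 1 - γ σ 1 * γ (t σ) 0)))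
        = fun _ => δ := by
      funext σ
      have h := hGd σ
      simp only [det2] at h
      linarith
    have hder := ((((hG' (t s)).comp s (ht' s)).sub (hG' s)).sub
        (((hγ'i 0 s).mul ((hγ'i 1 (t s)).comp s (ht' s))).sub
         ((hγ'i 1 s).mul ((hγ'i 0 (t s)).comp s (ht' s))))).const_mul (1/2)
    have hder' : HasDerivAt (fun σ => (1/2) * (G (t σ) - G σ - (γ σ 0 * γ (t σ) 1 - γ σ 1 * γ (t σ) 0))) _ s := hder
    rw [hAf] at hder'
    have h0 := hder'.unique (hasDerivAt_const s δ)
    simp only [det2, PiLp.sub_apply, Function.comp_apply] at h0 ⊢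
    linear_combination 2 * h0
  -- integration by parts fact (coordinates)
  have hJv : ((2*(deriv γ s 0)) • P (t s) - (2*(deriv γ s 1)) • Q (t s)
        - (2*(deriv γ s 0 * γ (t s) 1 - deriv γ s 1 * γ (t s) 0)) • γ s
        - (G (t s) - (γ s 0 * γ (t s) 1 - γ s 1 * γ (t s) 0)) • deriv γ s)
      - ((2*(deriv γ s 0)) • P s - (2*(deriv γ s 1)) • Q s
        - (2*(deriv γ s 0 * γ s 1 - deriv γ s 1 * γ s 0)) • γ s
        - (G s - (γ s 0 * γ s 1 - γ s 1 * γ s 0)) • deriv γ s)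
      = (deriv γ s 0 * (γ (t s) 1 - γ s 1) - deriv γ s 1 * (γ (t s) 0 - γ s 0)) • (γ (t s) - γ s)
        - (deriv γ s 0 * (γ s 1 - γ s 1) - deriv γ s 1 * (γ s 0 - γ s 0)) • (γ s - γ s) := by
    have hF1 : ∀ u ∈ Set.uIcc s (t s), HasDerivAt
        (fun u => (deriv γ s 0 * (γ u 1 - γ s 1) - deriv γ s 1 * (γ u 0 - γ s 0)) • (γ u - γ s))
        ((2*det2 (deriv γ s) (deriv γ u)) • (γ u - γ s)
          - det2 (γ u - γ s) (deriv γ u) • deriv γ s) u := by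
      intro u _
      have h := ((((hγ'i 1 u).sub_const (γ s 1)).const_mul (deriv γ s 0)).sub
          (((hγ'i 0 u).sub_const (γ s 0)).const_mul (deriv γ s 1))).smul ((hγ' u).sub_const (γ s))
      refine h.congr_deriv ?_
      ext i; fin_cases i <;>
        · simp only [det2, PiLp.add_apply, PiLp.sub_apply, PiLp.smul_apply, smul_eq_mul, Pi.sub_apply, Fin.mk_zero, Fin.mk_one]
          ring
    have hF2 : ∀ u ∈ Set.uIcc s (t s), HasDerivAt
        (fun u => (2*(deriv γ s 0)) • P u - (2*(deriv γ s 1)) • Q u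
          - (2*(deriv γ s 0 * γ u 1 - deriv γ s 1 * γ u 0)) • γ s
          - (G u - (γ s 0 * γ u 1 - γ s 1 * γ u 0)) • deriv γ s)
        ((2*det2 (deriv γ s) (deriv γ u)) • (γ u - γ s)
          - det2 (γ u - γ s) (deriv γ u) • deriv γ s) u := by
      intro u _
      have h := (((((hP' u).const_smul (2*(deriv γ s 0))).sub
          ((hQ' u).const_smul (2*(deriv γ s 1)))).sub
          (((((hγ'i 1 u).const_mul (deriv γ s 0)).sub
            ((hγ'i 0 u).const_mul (deriv γ s 1))).const_mul 2).smul_const (γ s))).sub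
          (((hG' u).sub (((hγ'i 1 u).const_mul (γ s 0)).sub
            ((hγ'i 0 u).const_mul (γ s 1)))).smul_const (deriv γ s)))
      refine h.congr_deriv ?_
      ext i; fin_cases i <;>
        · simp only [det2, PiLp.add_apply, PiLp.sub_apply, PiLp.smul_apply, smul_eq_mul, Fin.mk_zero, Fin.mk_one]
          ring
    have hcW : Continuous (fun u => (2*det2 (deriv γ s) (deriv γ u)) • (γ u - γ s)
        - det2 (γ u - γ s) (deriv γ u) • deriv γ s) := by
      simp only [det2]; fun_prop
    have e1 := integral_eq_sub_of_hasDerivAt hF1 (hcW.intervalIntegrable _ _)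
    have e2 := integral_eq_sub_of_hasDerivAt hF2 (hcW.intervalIntegrable _ _)
    exact e2.symm.trans e1
  -- clean derivative of the buoyancy curve
  have hbuoy2 : HasDerivAt (buoyCurve γ t δ)
      ((-det2 (γ (t s) - γ s) (deriv γ s) / (6*δ)) • (γ (t s) - γ s)) s := by
    have hB1 := ((hH' (t s)).scomp s (ht' s)).sub (hH' s)
    have hB2 := (((hG' (t s)).comp s (ht' s)).sub (hG' s)).smul (hγ' s)
    have hB3 := (hγ'i 0 s).smul (((hP' (t s)).scomp s (ht' s)).sub (hP' s))
    have hB4 := (hγ'i 1 s).smul (((hQ' (t s)).scomp s (ht' s)).sub (hQ' s))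
    have hB5 := (((hγ'i 0 s).mul ((hγ'i 1 (t s)).comp s (ht' s))).sub
        ((hγ'i 1 s).mul ((hγ'i 0 (t s)).comp s (ht' s)))).smul (hγ' s)
    have hcomb := (hγ' s).add (((((hB1.sub hB2).sub hB3).add hB4).add hB5).const_smul (1/(3*δ)))
    have hcomb2 := hcomb.congr_of_eventuallyEq (Filter.Eventually.of_forall fun σ => hbeq σ)
    refine hcomb2.congr_deriv (Eq.symm ?_)
    have hg := hGd s
    have hT2 := hTc
    have hJ0 := congrArg (fun v : R2 => v 0) hJv
    have hJ1 := congrArg (fun v : R2 => v 1) hJv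
    simp only [det2, PiLp.sub_apply] at hg hT2
    simp only [PiLp.add_apply, PiLp.sub_apply, PiLp.smul_apply, smul_eq_mul,
      Fin.mk_zero, Fin.mk_one] at hJ0 hJ1
    ext i
    fin_cases i
    · simp only [det2, PiLp.add_apply, PiLp.sub_apply, PiLp.smul_apply, smul_eq_mul,
        Fin.mk_zero, Fin.mk_one, Function.comp_apply, Pi.sub_apply, Pi.mul_apply]
      field_simp
      linear_combination 3 * hJ0 + (9*(deriv γ s 0)) * hg - (6*(γ (t s) 0 - γ s 0)) * hT2
    · simp only [det2, PiLp.add_apply, PiLp.sub_apply, PiLp.smul_apply, smul_eq_mul,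
        Fin.mk_zero, Fin.mk_one, Function.comp_apply, Pi.sub_apply, Pi.mul_apply]
      field_simp
      linear_combination 3 * hJ1 + (9*(deriv γ s 1)) * hg - (6*(γ (t s) 1 - γ s 1)) * hT2
  -- clean derivative of the flotation curve
  have hflot2 : HasDerivAt (flotCurve γ t)
      ((det2 (deriv γ s) (deriv γ (t s)) / (2 * det2 (γ (t s) - γ s) (deriv γ (t s)))) •
        (γ (t s) - γ s)) s := by
    have hcomb : HasDerivAt (flotCurve γ t) (((1:ℝ)/2) • (deriv γ s + T • deriv γ (t s))) s :=
      ((hγ' s).add ((hγ' (t s)).scomp s (ht' s))).const_smul ((1:ℝ)/2)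
    convert hcomb using 1
    have h2 := hc2 s
    have hT2 := hTc
    simp only [det2, PiLp.sub_apply] at h2 hT2
    ext i
    fin_cases i
    · simp only [det2, PiLp.add_apply, PiLp.sub_apply, PiLp.smul_apply, smul_eq_mul,
          Fin.mk_zero, Fin.mk_one]
      rw [div_mul_eq_mul_div, div_eq_iff (by
          intro h; exact h2 (by linarith))]
      linear_combination (-(deriv γ (t s) 0)) * hT2
    · simp only [det2, PiLp.add_apply, PiLp.sub_apply, PiLp.smul_apply, smul_eq_mul,
          Fin.mk_zero, Fin.mk_one]
      rw [div_mul_eq_mul_div, div_eq_iff (by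
          intro h; exact h2 (by linarith))]
      linear_combination (-(deriv γ (t s) 1)) * hT2
  rw [hbuoy2.deriv, hflot2.deriv, smul_smul]
  congr 1
  have h1 := hc2 s
  have h2 := hδ0.ne'
  field_simp
  ring
end
end

section
/- Under the flotation setup with det(γ'(s), γ'(t(s))) ≠ 0 for all s, for any fixed λ > 1 the following are equivalent: (i) there exists z ∈ ℝ² such that r₂(s) = z + λ·(r₁(s) − z) for all s (the flotation curve Π_δ(K) is mapped onto the buoyancy curve Γ_δ(K) by a homothety with ratio λ); (ii) ‖c(s)‖³ = 12δλ for all s, i.e., the cubed affine distance between the endpoints of every chord of flotation is constant, equal to 12δλ. -/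
open Real MeasureTheory intervalIntegral

noncomputable section

lemma hasDerivAt_primitive {q : ℝ → ℝ} (hq : Continuous q) (a : ℝ) :
    HasDerivAt (fun x => ∫ u in (0:ℝ)..x, q u) (q a) a :=
  intervalIntegral.integral_hasDerivAt_right (hq.intervalIntegrable _ _)
    hq.stronglyMeasurable.stronglyMeasurableAtFilter hq.continuousAt

lemma hasDerivAt_slide {q : ℝ → ℝ} (hq : Continuous q) {t : ℝ → ℝ} {s tp : ℝ}
    (ht : HasDerivAt t tp s) :
    HasDerivAt (fun x => ∫ u in x..t x, q u) (tp * q (t s) - q s) s := by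
  have h1 : ∀ x, (∫ u in x..t x, q u)
      = (∫ u in (0:ℝ)..t x, q u) - ∫ u in (0:ℝ)..x, q u := fun x =>
    (intervalIntegral.integral_interval_sub_left (hq.intervalIntegrable _ _)
      (hq.intervalIntegrable _ _)).symm
  have h2 : HasDerivAt (fun x => (∫ u in (0:ℝ)..t x, q u) - ∫ u in (0:ℝ)..x, q u)
      (tp * q (t s) - q s) s := by
    have hc := (hasDerivAt_primitive hq (t s)).comp s ht
    exact (hc.sub (hasDerivAt_primitive hq s)).congr_deriv (by ring)
  exact h2.congr_of_eventuallyEq (Filter.Eventually.of_forall h1)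

lemma integral_comb6 {P p r1 h1 r0 h0 : ℝ → ℝ} (hP : Continuous P) (hp : Continuous p)
    (hr1 : Continuous r1) (hh1 : Continuous h1) (hr0 : Continuous r0) (hh0 : Continuous h0)
    (e a b c d : ℝ) :
    ∫ u in c..d, (P u - e * p u - a * r1 u + (a*e) * h1 u + b * r0 u - (b*e) * h0 u)
      = (∫ u in c..d, P u) - e * (∫ u in c..d, p u) - a * (∫ u in c..d, r1 u)
        + (a*e) * (∫ u in c..d, h1 u) + b * (∫ u in c..d, r0 u)
        - (b*e) * (∫ u in c..d, h0 u) := by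
  have i1 : IntervalIntegrable P volume c d := hP.intervalIntegrable _ _
  have i2 : IntervalIntegrable (fun u => e * p u) volume c d :=
    (continuous_const.mul hp).intervalIntegrable _ _
  have i3 : IntervalIntegrable (fun u => a * r1 u) volume c d :=
    (continuous_const.mul hr1).intervalIntegrable _ _
  have i4 : IntervalIntegrable (fun u => (a*e) * h1 u) volume c d :=
    (continuous_const.mul hh1).intervalIntegrable _ _
  have i5 : IntervalIntegrable (fun u => b * r0 u) volume c d :=
    (continuous_const.mul hr0).intervalIntegrable _ _
  have i6 : IntervalIntegrable (fun u => (b*e) * h0 u) volume c d :=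
    (continuous_const.mul hh0).intervalIntegrable _ _
  rw [intervalIntegral.integral_sub ((((i1.sub i2).sub i3).add i4).add i5) i6,
    intervalIntegral.integral_add (((i1.sub i2).sub i3).add i4) i5,
    intervalIntegral.integral_add ((i1.sub i2).sub i3) i4,
    intervalIntegral.integral_sub (i1.sub i2) i3,
    intervalIntegral.integral_sub i1 i2,
    intervalIntegral.integral_const_mul, intervalIntegral.integral_const_mul,
    intervalIntegral.integral_const_mul, intervalIntegral.integral_const_mul,
    intervalIntegral.integral_const_mul]

/-- homothety of flotation and buoyancy curve is equivalent to constant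
affine distance between chord endpoints. -/
theorem stmt8
    (γ : ℝ → R2) (L : ℝ) (hL : 0 < L)
    (hγ : ContDiff ℝ 2 γ)
    (hper : ∀ s, γ (s + L) = γ s)
    (hreg : ∀ s, deriv γ s ≠ 0)
    (hinj : Set.InjOn γ (Set.Ico 0 L))
    (hor : 0 < ∫ s in (0:ℝ)..L, det2 (γ s) (deriv γ s))
    (K : Set R2) (hKconv : Convex ℝ K) (hKcomp : IsCompact K)
    (hKint : (interior K).Nonempty) (hKbd : frontier K = Set.range γ)
    (δ : ℝ) (hδ0 : 0 < δ) (hδK : δ < (volume K).toReal)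
    (t : ℝ → ℝ) (ht : ContDiff ℝ 1 t)
    (htrange : ∀ s, s < t s ∧ t s < s + L)
    (hA : ∀ s, (1/2) * ∫ u in s..t s, det2 (γ u - γ s) (deriv γ u) = δ)
    (hc1 : ∀ s, det2 (γ (t s) - γ s) (deriv γ s) ≠ 0)
    (hc2 : ∀ s, det2 (γ (t s) - γ s) (deriv γ (t s)) ≠ 0)
    (hpar : ∀ s, det2 (deriv γ s) (deriv γ (t s)) ≠ 0)
    (lam : ℝ) (hlam : 1 < lam) :
    (∃ z : R2, ∀ s, buoyCurve γ t δ s = z + lam • (flotCurve γ t s - z)) ↔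
      (∀ s, -4 * det2 (γ (t s) - γ s) (deriv γ s) * det2 (γ (t s) - γ s) (deriv γ (t s)) /
          det2 (deriv γ s) (deriv γ (t s)) = 12 * δ * lam) := by
  -- Preliminaries
  have hδ' : (3:ℝ) * δ ≠ 0 := by positivity
  have hγdiff : Differentiable ℝ γ := hγ.differentiable two_ne_zero
  have hγc : Continuous γ := hγdiff.continuous
  have hgc : Continuous (deriv γ) := hγ.continuous_deriv one_le_two
  have hproj : ∀ i : Fin 2, Continuous (fun v : R2 => v i) := fun i =>
    (EuclideanSpace.proj i : R2 →L[ℝ] ℝ).continuous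
  have hγci : ∀ i : Fin 2, Continuous (fun u => γ u i) := fun i => (hproj i).comp hγc
  have hgci : ∀ i : Fin 2, Continuous (fun u => deriv γ u i) := fun i => (hproj i).comp hgc
  have hγdi : ∀ (s : ℝ) (i : Fin 2), HasDerivAt (fun x => γ x i) (deriv γ s i) s := fun s i =>
    (EuclideanSpace.proj i : R2 →L[ℝ] ℝ).hasFDerivAt.comp_hasDerivAt s (hγdiff s).hasDerivAt
  have htd : ∀ s, HasDerivAt t (deriv t s) s := fun s => (ht.differentiable one_ne_zero s).hasDerivAt
  -- scalar integrand functions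
  set p : ℝ → ℝ := fun u => det2 (γ u) (deriv γ u) with hpdef
  have hpc : Continuous p := by
    simp only [hpdef, det2]
    exact ((hγci 0).mul (hgci 1)).sub ((hγci 1).mul (hgci 0))
  -- FTC values for derivative coordinates
  have hftc : ∀ (s : ℝ) (i : Fin 2), (∫ u in s..t s, deriv γ u i) = γ (t s) i - γ s i := by
    intro s i
    exact intervalIntegral.integral_eq_sub_of_hasDerivAt
      (fun u _ => hγdi u i) ((hgci i).intervalIntegrable _ _)
  -- expansion of the area integrand
  have hSexp : ∀ x, (∫ u in x..t x, det2 (γ u - γ x) (deriv γ u))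
      = (∫ u in x..t x, p u) - γ x 0 * (∫ u in x..t x, deriv γ u 1)
        + γ x 1 * (∫ u in x..t x, deriv γ u 0) := by
    intro x
    rw [intervalIntegral.integral_congr
      (g := fun u => p u - γ x 0 * deriv γ u 1 + γ x 1 * deriv γ u 0)
      (fun u _ => by simp only [hpdef, det2, PiLp.sub_apply]; ring)]
    rw [intervalIntegral.integral_add (f := fun u => p u - γ x 0 * deriv γ u 1)
        (g := fun u => γ x 1 * deriv γ u 0)
        ((hpc.sub (continuous_const.mul (hgci 1))).intervalIntegrable _ _)
        ((continuous_const.mul (hgci 0)).intervalIntegrable _ _),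
      intervalIntegral.integral_sub (f := fun u => p u) (g := fun u => γ x 0 * deriv γ u 1)
        (hpc.intervalIntegrable _ _)
        ((continuous_const.mul (hgci 1)).intervalIntegrable _ _),
      intervalIntegral.integral_const_mul, intervalIntegral.integral_const_mul]
  -- value of ∫ p over the chord
  have hSp : ∀ s, (∫ u in s..t s, p u)
      = 2*δ + γ s 0 * (γ (t s) 1 - γ s 1) - γ s 1 * (γ (t s) 0 - γ s 0) := by
    intro s
    have h := hA s
    rw [hSexp s, hftc s 0, hftc s 1] at h
    linarith
  -- derivative of t : t' * d2 + d1 = 0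
  have trel : ∀ s, deriv t s * det2 (γ (t s) - γ s) (deriv γ (t s))
      + det2 (γ (t s) - γ s) (deriv γ s) = 0 := by
    intro s
    have hD : HasDerivAt
        (fun x => (∫ u in x..t x, p u) - γ x 0 * (∫ u in x..t x, deriv γ u 1)
          + γ x 1 * (∫ u in x..t x, deriv γ u 0))
        ((deriv t s * p (t s) - p s)
          - (deriv γ s 0 * (∫ u in s..t s, deriv γ u 1)
             + γ s 0 * (deriv t s * deriv γ (t s) 1 - deriv γ s 1))
          + (deriv γ s 1 * (∫ u in s..t s, deriv γ u 0)
             + γ s 1 * (deriv t s * deriv γ (t s) 0 - deriv γ s 0))) s := by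
      exact ((hasDerivAt_slide hpc (htd s)).sub
          ((hγdi s 0).mul (hasDerivAt_slide (hgci 1) (htd s)))).add
        ((hγdi s 1).mul (hasDerivAt_slide (hgci 0) (htd s)))
    have hconstf : (fun x => (∫ u in x..t x, p u) - γ x 0 * (∫ u in x..t x, deriv γ u 1)
        + γ x 1 * (∫ u in x..t x, deriv γ u 0)) = fun _ => 2*δ := by
      funext x
      have h := hA x
      rw [hSexp x] at h
      linarith
    have hzero : ((deriv t s * p (t s) - p s)
          - (deriv γ s 0 * (∫ u in s..t s, deriv γ u 1)
             + γ s 0 * (deriv t s * deriv γ (t s) 1 - deriv γ s 1))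
          + (deriv γ s 1 * (∫ u in s..t s, deriv γ u 0)
             + γ s 1 * (deriv t s * deriv γ (t s) 0 - deriv γ s 0))) = 0 := by
      have hc : HasDerivAt (fun x : ℝ => (2:ℝ)*δ) 0 s := hasDerivAt_const s _
      exact hD.unique (hconstf ▸ hc)
    rw [hftc s 0, hftc s 1] at hzero
    simp only [hpdef, det2, PiLp.sub_apply] at hzero ⊢
    linear_combination hzero
  -- more scalar integrands
  have hq1gc : ∀ i : Fin 2, Continuous (fun u => deriv γ u 1 * γ u i) := fun i =>
    (hgci 1).mul (hγci i)
  have hq0gc : ∀ i : Fin 2, Continuous (fun u => deriv γ u 0 * γ u i) := fun i =>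
    (hgci 0).mul (hγci i)
  have hpgc : ∀ i : Fin 2, Continuous (fun u => p u * γ u i) := fun i => hpc.mul (hγci i)
  -- the integration-by-parts identity (Jeq)
  have Jeq : ∀ (s : ℝ) (i : Fin 2),
      2*(deriv γ s 0)*(∫ u in s..t s, deriv γ u 1 * γ u i)
        - 2*(deriv γ s 1)*(∫ u in s..t s, deriv γ u 0 * γ u i)
        - deriv γ s i * (∫ u in s..t s, p u)
      = (deriv γ s 0 * γ (t s) 1 - deriv γ s 1 * γ (t s) 0) * γ (t s) i
        - (deriv γ s 0 * γ s 1 - deriv γ s 1 * γ s 0) * γ s i := by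
    intro s i
    have hF : ∀ u : ℝ, HasDerivAt (fun y => (deriv γ s 0 * γ y 1 - deriv γ s 1 * γ y 0) * γ y i)
        ((deriv γ s 0 * deriv γ u 1 - deriv γ s 1 * deriv γ u 0) * γ u i
          + (deriv γ s 0 * γ u 1 - deriv γ s 1 * γ u 0) * deriv γ u i) u := fun u =>
      (((hγdi u 1).const_mul (deriv γ s 0)).sub ((hγdi u 0).const_mul (deriv γ s 1))).mul
        (hγdi u i)
    have hFc : Continuous (fun u => (deriv γ s 0 * deriv γ u 1 - deriv γ s 1 * deriv γ u 0) * γ u i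
        + (deriv γ s 0 * γ u 1 - deriv γ s 1 * γ u 0) * deriv γ u i) :=
      (((continuous_const.mul (hgci 1)).sub (continuous_const.mul (hgci 0))).mul (hγci i)).add
        (((continuous_const.mul (hγci 1)).sub (continuous_const.mul (hγci 0))).mul (hgci i))
    have hint := intervalIntegral.integral_eq_sub_of_hasDerivAt (fun u _ => hF u)
      (hFc.intervalIntegrable s (t s))
    rw [intervalIntegral.integral_congr
      (g := fun u => (2*deriv γ s 0) * (deriv γ u 1 * γ u i)
        - (2*deriv γ s 1) * (deriv γ u 0 * γ u i) - deriv γ s i * p u)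
      (fun u _ => by simp only [hpdef, det2]; fin_cases i <;> · simp only [Fin.zero_eta, Fin.mk_one]; ring)] at hint
    rw [intervalIntegral.integral_sub
        (f := fun u => (2*deriv γ s 0) * (deriv γ u 1 * γ u i) - (2*deriv γ s 1) * (deriv γ u 0 * γ u i))
        (g := fun u => deriv γ s i * p u)
        (((continuous_const.mul (hq1gc i)).sub (continuous_const.mul (hq0gc i))).intervalIntegrable _ _)
        ((continuous_const.mul hpc).intervalIntegrable _ _),
      intervalIntegral.integral_sub (f := fun u => (2*deriv γ s 0) * (deriv γ u 1 * γ u i))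
        (g := fun u => (2*deriv γ s 1) * (deriv γ u 0 * γ u i))
        ((continuous_const.mul (hq1gc i)).intervalIntegrable _ _)
        ((continuous_const.mul (hq0gc i)).intervalIntegrable _ _),
      intervalIntegral.integral_const_mul, intervalIntegral.integral_const_mul,
      intervalIntegral.integral_const_mul] at hint
    linarith [hint]
  -- coordinate expansion of the buoyancy curve
  have hvecc : ∀ x : ℝ, Continuous (fun u => det2 (γ u - γ x) (deriv γ u) • (γ u - γ x)) := by
    intro x
    have hsc : Continuous (fun u => det2 (γ u - γ x) (deriv γ u)) := by
      simp only [det2, PiLp.sub_apply]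
      exact (((hγci 0).sub continuous_const).mul (hgci 1)).sub
        (((hγci 1).sub continuous_const).mul (hgci 0))
    exact hsc.smul (hγc.sub continuous_const)
  have hBexp : ∀ (x : ℝ) (i : Fin 2), buoyCurve γ t δ x i
      = γ x i + (1/(3*δ)) * ((∫ u in x..t x, p u * γ u i)
          - γ x i * (∫ u in x..t x, p u)
          - γ x 0 * (∫ u in x..t x, deriv γ u 1 * γ u i)
          + (γ x 0 * γ x i) * (∫ u in x..t x, deriv γ u 1)
          + γ x 1 * (∫ u in x..t x, deriv γ u 0 * γ u i)
          - (γ x 1 * γ x i) * (∫ u in x..t x, deriv γ u 0)) := by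
    intro x i
    have hcoord : (∫ u in x..t x, det2 (γ u - γ x) (deriv γ u) • (γ u - γ x)) i
        = ∫ u in x..t x, det2 (γ u - γ x) (deriv γ u) * (γ u i - γ x i) := by
      have := ((EuclideanSpace.proj i : R2 →L[ℝ] ℝ).intervalIntegral_comp_comm (μ := volume)
        ((hvecc x).intervalIntegrable x (t x))).symm
      simpa [PiLp.proj_apply, PiLp.sub_apply, PiLp.smul_apply, smul_eq_mul] using this
    have hexp : (∫ u in x..t x, det2 (γ u - γ x) (deriv γ u) * (γ u i - γ x i))
        = (∫ u in x..t x, p u * γ u i)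
          - γ x i * (∫ u in x..t x, p u)
          - γ x 0 * (∫ u in x..t x, deriv γ u 1 * γ u i)
          + (γ x 0 * γ x i) * (∫ u in x..t x, deriv γ u 1)
          + γ x 1 * (∫ u in x..t x, deriv γ u 0 * γ u i)
          - (γ x 1 * γ x i) * (∫ u in x..t x, deriv γ u 0) := by
      rw [intervalIntegral.integral_congr
        (g := fun u => p u * γ u i - γ x i * p u - γ x 0 * (deriv γ u 1 * γ u i)
          + (γ x 0 * γ x i) * deriv γ u 1 + γ x 1 * (deriv γ u 0 * γ u i)
          - (γ x 1 * γ x i) * deriv γ u 0)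
        (fun u _ => by simp only [hpdef, det2, PiLp.sub_apply]; ring)]
      exact integral_comb6 (hpgc i) hpc (hq1gc i) (hgci 1) (hq0gc i) (hgci 0) _ _ _ _ _
    rw [buoyCurve, PiLp.add_apply, PiLp.smul_apply, smul_eq_mul, hcoord, hexp]
  -- derivative of the buoyancy coordinate
  have hbuoyD : ∀ (s : ℝ) (i : Fin 2),
      HasDerivAt (fun x => buoyCurve γ t δ x i)
        (-(det2 (γ (t s) - γ s) (deriv γ s)/(6*δ)) * (γ (t s) i - γ s i)) s := by
    intro s i
    have t1 := hasDerivAt_slide (hpgc i) (htd s)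
    have t2 := (hγdi s i).mul (hasDerivAt_slide hpc (htd s))
    have t3 := (hγdi s 0).mul (hasDerivAt_slide (hq1gc i) (htd s))
    have t4 := ((hγdi s 0).mul (hγdi s i)).mul (hasDerivAt_slide (hgci 1) (htd s))
    have t5 := (hγdi s 1).mul (hasDerivAt_slide (hq0gc i) (htd s))
    have t6 := ((hγdi s 1).mul (hγdi s i)).mul (hasDerivAt_slide (hgci 0) (htd s))
    have hN := ((((t1.sub t2).sub t3).add t4).add t5).sub t6
    have hB := (hγdi s i).add (hN.const_mul (1/(3*δ)))
    have hB2 : HasDerivAt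
        (fun x => γ x i + (1/(3*δ)) * ((∫ u in x..t x, p u * γ u i)
          - γ x i * (∫ u in x..t x, p u)
          - γ x 0 * (∫ u in x..t x, deriv γ u 1 * γ u i)
          + (γ x 0 * γ x i) * (∫ u in x..t x, deriv γ u 1)
          + γ x 1 * (∫ u in x..t x, deriv γ u 0 * γ u i)
          - (γ x 1 * γ x i) * (∫ u in x..t x, deriv γ u 0)))
        (deriv γ s i + (1/(3*δ)) * (-(1/2) * det2 (γ (t s) - γ s) (deriv γ s)
          * (γ (t s) i - γ s i) - 3*δ*deriv γ s i)) s := by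
      refine hB.congr_deriv ?_
      symm
      simp only [Pi.mul_apply, Pi.add_apply, Pi.sub_apply]
      rw [hftc s 0, hftc s 1]
      have hps : p s = γ s 0 * deriv γ s 1 - γ s 1 * deriv γ s 0 := by
        simp [hpdef, det2]
      have hpts : p (t s) = γ (t s) 0 * deriv γ (t s) 1 - γ (t s) 1 * deriv γ (t s) 0 := by
        simp [hpdef, det2]
      rw [hps, hpts]
      have hJ := Jeq s i
      have hS := hSp s
      have hT := trel s
      simp only [det2, PiLp.sub_apply] at hT ⊢
      fin_cases i
      · simp only [Fin.zero_eta] at hJ ⊢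
        linear_combination (1/(3*δ)) * (-(γ (t s) 0 - γ s 0) * hT + (1/2) * hJ
          + (3/2) * (deriv γ s 0) * hS)
      · simp only [Fin.mk_one] at hJ ⊢
        linear_combination (1/(3*δ)) * (-(γ (t s) 1 - γ s 1) * hT + (1/2) * hJ
          + (3/2) * (deriv γ s 1) * hS)
    have hBfun := hB2.congr_of_eventuallyEq
      (Filter.Eventually.of_forall (fun x => hBexp x i))
    refine hBfun.congr_deriv ?_
    symm
    field_simp
    ring
  -- derivative of the flotation coordinate
  have hflotD : ∀ (s : ℝ) (i : Fin 2),
      HasDerivAt (fun x => flotCurve γ t x i)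
        ((1/2) * (deriv γ s i + deriv γ (t s) i * deriv t s)) s := by
    intro s i
    have hcomp : HasDerivAt (fun x => γ (t x) i) (deriv γ (t s) i * deriv t s) s :=
      (hγdi (t s) i).comp s (htd s)
    have h := ((hγdi s i).add hcomp).const_mul ((1:ℝ)/2)
    exact h.congr_of_eventuallyEq (Filter.Eventually.of_forall (fun x => by
      simp only [flotCurve, PiLp.smul_apply, PiLp.add_apply, smul_eq_mul, Pi.add_apply]))
  constructor
  · rintro ⟨z, hz⟩ s
    have hEq : ∀ i : Fin 2,
        -(det2 (γ (t s) - γ s) (deriv γ s)/(6*δ)) * (γ (t s) i - γ s i)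
          = lam * ((1/2) * (deriv γ s i + deriv γ (t s) i * deriv t s)) := by
      intro i
      have h1 := hbuoyD s i
      have h3 : HasDerivAt (fun x => z i + lam * (flotCurve γ t x i - z i))
          (lam * ((1/2) * (deriv γ s i + deriv γ (t s) i * deriv t s))) s := by
        have h4 := ((hflotD s i).sub_const (z i)).const_mul lam
        exact ((hasDerivAt_const s (z i)).add h4).congr_deriv (by ring)
      have h2 : HasDerivAt (fun x => buoyCurve γ t δ x i)
          (lam * ((1/2) * (deriv γ s i + deriv γ (t s) i * deriv t s))) s :=
        h3.congr_of_eventuallyEq (Filter.Eventually.of_forall (fun x => by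
          simp only [hz x, PiLp.add_apply, PiLp.sub_apply, PiLp.smul_apply, smul_eq_mul]))
      exact h1.unique h2
    rw [div_eq_iff (hpar s)]
    have e0 := hEq 0
    have e1 := hEq 1
    have hT := trel s
    simp only [det2, PiLp.sub_apply] at e0 e1 hT ⊢
    field_simp [hδ0.ne'] at e0 e1
    linear_combination (2 * deriv γ (t s) 1) * e0 - (2 * deriv γ (t s) 0) * e1
  · intro h
    have hconst : ∀ (i : Fin 2) (x : ℝ),
        buoyCurve γ t δ x i - lam * flotCurve γ t x i
          = buoyCurve γ t δ 0 i - lam * flotCurve γ t 0 i := by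
      intro i x
      have hder : ∀ y : ℝ, HasDerivAt
          (fun x => buoyCurve γ t δ x i - lam * flotCurve γ t x i) 0 y := by
        intro y
        have hy := h y
        rw [div_eq_iff (hpar y)] at hy
        have htp : deriv t y = -(det2 (γ (t y) - γ y) (deriv γ y))
            / det2 (γ (t y) - γ y) (deriv γ (t y)) := by
          have hT := trel y
          field_simp [hc2 y]
          linarith
        have h0 : -(det2 (γ (t y) - γ y) (deriv γ y)/(6*δ)) * (γ (t y) i - γ y i)
            - lam * ((1/2) * (deriv γ y i + deriv γ (t y) i * deriv t y)) = 0 := by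
          rw [htp]
          simp only [det2, PiLp.sub_apply] at hy ⊢
          have hd2 : (γ (t y) 0 - γ y 0) * deriv γ (t y) 1
              - (γ (t y) 1 - γ y 1) * deriv γ (t y) 0 ≠ 0 := by
            have := hc2 y; simpa [det2, PiLp.sub_apply] using this
          field_simp
          fin_cases i
          · simp only [Fin.zero_eta]
            linear_combination ((γ (t y) 0 - γ y 0) / 2) * hy
          · simp only [Fin.mk_one]
            linear_combination ((γ (t y) 1 - γ y 1) / 2) * hy
        exact h0 ▸ ((hbuoyD y i).sub ((hflotD y i).const_mul lam))
      exact is_const_of_deriv_eq_zero (fun y => (hder y).differentiableAt)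
        (fun y => (hder y).deriv) x 0
    refine ⟨((1-lam)⁻¹) • (buoyCurve γ t δ 0 - lam • flotCurve γ t 0), fun s => ?_⟩
    have hlam' : (1:ℝ) - lam ≠ 0 := by linarith
    ext i
    have hc := hconst i s
    simp only [PiLp.add_apply, PiLp.sub_apply, PiLp.smul_apply, smul_eq_mul]
    field_simp
    linear_combination (1 - lam) * hc
end
end

section
/- Under the flotation setup, the following are equivalent: (i) for every s, det(c(s), γ'(s))³ · det(γ'(t(s)), γ''(t(s))) + det(c(s), γ'(t(s)))³ · det(γ'(s), γ''(s)) = 0; (ii) the function s ↦ ∫_s^{t(s)} det(γ'(u), γ''(u))^{1/3} du is constant, i.e., the affine arc length of the boundary arc cut off from K by the chord of flotation is the same for every chord. -/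
open Real MeasureTheory intervalIntegral

noncomputable section

lemma aux_smooth1 {γ : ℝ → R2} (hγ : ContDiff ℝ 2 γ) : ContDiff ℝ 1 (deriv γ) :=
  (contDiff_succ_iff_deriv.mp (by exact_mod_cast hγ)).2.2

lemma aux_smooth0 {γ : ℝ → R2} (hγ : ContDiff ℝ 1 γ) : Continuous (deriv γ) :=
  ((contDiff_succ_iff_deriv.mp (by exact_mod_cast hγ)).2.2 : ContDiff ℝ 0 _).continuous

lemma aux_hd {γ : ℝ → R2} (hγ : ContDiff ℝ 1 γ) (v : ℝ) : HasDerivAt γ (deriv γ v) v :=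
  ((hγ.differentiable one_ne_zero) v).hasDerivAt

lemma cont_det2 {f g : ℝ → R2} (hf : Continuous f) (hg : Continuous g) :
    Continuous fun u => det2 (f u) (g u) := by
  simp only [det2]
  fun_prop

lemma hasDerivAt_coord {γ : ℝ → R2} {v : ℝ} (h : HasDerivAt γ (deriv γ v) v) (i : Fin 2) :
    HasDerivAt (fun s => γ s i) ((deriv γ v) i) v := by
  have := (EuclideanSpace.proj (𝕜 := ℝ) i).hasFDerivAt.comp_hasDerivAt v h
  simpa [Function.comp_def] using this

lemma odd3 : Odd (3:ℕ) := ⟨1, by norm_num⟩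

lemma cube_root_cube {x : ℝ} (hx : 0 ≤ x) : (x ^ ((1:ℝ)/3)) ^ (3:ℕ) = x := by
  rw [← Real.rpow_natCast (x ^ ((1:ℝ)/3)) 3, ← Real.rpow_mul hx]
  norm_num

lemma ptwise {a b t' κs κt : ℝ} (hb : b ≠ 0) (hrel : t' * b + a = 0)
    (hκs : 0 ≤ κs) (hκt : 0 ≤ κt) :
    (a ^ 3 * κt + b ^ 3 * κs = 0) ↔ t' * κt ^ ((1:ℝ)/3) - κs ^ ((1:ℝ)/3) = 0 := by
  set X := κt ^ ((1:ℝ)/3) with hXdef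
  set Y := κs ^ ((1:ℝ)/3) with hYdef
  have hX : X ^ (3:ℕ) = κt := cube_root_cube hκt
  have hY : Y ^ (3:ℕ) = κs := cube_root_cube hκs
  have hinj := (Odd.strictMono_pow (R := ℝ) odd3).injective
  constructor
  · intro h
    have h3 : (b * Y) ^ (3:ℕ) = (-(a * X)) ^ (3:ℕ) := by
      have e1 : (b * Y) ^ (3:ℕ) = b ^ 3 * κs := by rw [mul_pow, hY]
      have e2 : (-(a * X)) ^ (3:ℕ) = -(a ^ 3 * κt) := by
        rw [Odd.neg_pow odd3, mul_pow, hX]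
      rw [e1, e2]; linarith
    have hbY : b * Y = -(a * X) := hinj h3
    have hz : b * (t' * X - Y) = 0 := by linear_combination X * hrel - hbY
    rcases mul_eq_zero.mp hz with h | h
    · exact absurd h hb
    · exact h
  · intro h
    have hbY : b * Y = -(a * X) := by linear_combination (-b) * h + X * hrel
    have h3 := congrArg (fun z => z ^ (3:ℕ)) hbY
    rw [Odd.neg_pow odd3, mul_pow, mul_pow, hX, hY] at h3
    linarith

lemma support_aux {γ : ℝ → R2} (hγ : ContDiff ℝ 2 γ) {K : Set R2}
    (hKconv : Convex ℝ K) (hKcomp : IsCompact K) (hKbd : frontier K = Set.range γ)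
    {x₀ : R2} (hx₀ : x₀ ∈ interior K) (u : ℝ) (hreg : deriv γ u ≠ 0) :
    det2 (γ u - x₀) (deriv γ u) ≠ 0 ∧
    0 ≤ det2 (γ u - x₀) (deriv γ u) * det2 (deriv γ u) (deriv (deriv γ) u) := by
  have hγ1 : ContDiff ℝ 1 γ := hγ.of_le (by norm_num)
  have hd1 : ContDiff ℝ 1 (deriv γ) := aux_smooth1 hγ
  have hKcl : IsClosed K := hKcomp.isClosed
  have hmemK : ∀ v : ℝ, γ v ∈ K := by
    intro v
    have h1 : γ v ∈ frontier K := hKbd ▸ Set.mem_range_self v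
    exact frontier_subset_closure.trans hKcl.closure_eq.subset h1
  have hnotint : γ u ∉ interior K := by
    have h1 : γ u ∈ frontier K := hKbd ▸ Set.mem_range_self u
    exact h1.2
  obtain ⟨f, hf⟩ := geometric_hahn_banach_open_point hKconv.interior isOpen_interior hnotint
  have hfle : ∀ y ∈ K, f y ≤ f (γ u) := by
    intro y hy
    by_contra hlt
    push_neg at hlt
    have hcont : Continuous fun θ : ℝ => f (θ • x₀ + (1 - θ) • y) := by fun_prop
    have hopen : IsOpen {θ : ℝ | f (γ u) < f (θ • x₀ + (1 - θ) • y)} :=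
      isOpen_lt continuous_const hcont
    have h0 : (0:ℝ) ∈ {θ : ℝ | f (γ u) < f (θ • x₀ + (1 - θ) • y)} := by
      simpa using hlt
    obtain ⟨ε, hε, hball⟩ := Metric.isOpen_iff.mp hopen 0 h0
    set θ : ℝ := min (ε / 2) (1 / 2) with hθdef
    have hθpos : 0 < θ := lt_min (by linarith) (by norm_num)
    have hθle : θ ≤ 1 / 2 := min_le_right _ _
    have hθball : θ ∈ Metric.ball (0:ℝ) ε := by
      simp only [Metric.mem_ball, Real.dist_eq, sub_zero, abs_of_pos hθpos]
      exact lt_of_le_of_lt (min_le_left _ _) (by linarith)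
    have hθmem : θ • x₀ + (1 - θ) • y ∈ interior K :=
      hKconv.combo_interior_closure_mem_interior hx₀ (subset_closure hy) hθpos
        (by linarith) (by ring)
    have h2 := hball hθball
    have h3 := hf _ hθmem
    exact absurd h3 (not_lt.mpr (le_of_lt h2))
  have hdγ : ∀ v, HasDerivAt γ (deriv γ v) v := aux_hd hγ1
  have hg : ∀ v, HasDerivAt (fun w => f (γ w)) (f (deriv γ v)) v := fun v =>
    f.hasFDerivAt.comp_hasDerivAt v (hdγ v)
  have hlocmax : IsLocalMax (fun w => f (γ w)) u :=
    Filter.Eventually.of_forall fun v => hfle _ (hmemK v)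
  have hg'u : f (deriv γ u) = 0 := by
    have h := hlocmax.deriv_eq_zero
    rwa [(hg u).deriv] at h
  have hg2 : f (deriv (deriv γ) u) ≤ 0 := by
    by_contra hpos
    push_neg at hpos
    have hcontG : Continuous fun v => f (deriv (deriv γ) v) :=
      f.continuous.comp (aux_smooth0 hd1)
    have hopen : IsOpen {v : ℝ | 0 < f (deriv (deriv γ) v)} :=
      isOpen_lt continuous_const hcontG
    obtain ⟨ε, hε, hball⟩ := Metric.isOpen_iff.mp hopen u hpos
    have hsub : Set.Icc u (u + ε / 2) ⊆ Metric.ball u ε := by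
      intro x hx
      simp only [Set.mem_Icc] at hx
      simp only [Metric.mem_ball, Real.dist_eq, abs_lt]
      constructor <;> linarith [hx.1, hx.2]
    have hg' : ∀ v, HasDerivAt (fun w => f (deriv γ w)) (f (deriv (deriv γ) v)) v := fun v =>
      f.hasFDerivAt.comp_hasDerivAt v (aux_hd hd1 v)
    have hmono : StrictMonoOn (fun w => f (deriv γ w)) (Set.Icc u (u + ε / 2)) := by
      apply strictMonoOn_of_deriv_pos (convex_Icc _ _)
        (Continuous.continuousOn (f.continuous.comp hd1.continuous))
      intro x hx
      rw [interior_Icc] at hx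
      show 0 < deriv (fun w => f (deriv γ w)) x
      rw [(hg' x).deriv]
      exact hball (hsub ⟨hx.1.le, hx.2.le⟩)
    have hmono2 : StrictMonoOn (fun w => f (γ w)) (Set.Icc u (u + ε / 2)) := by
      apply strictMonoOn_of_deriv_pos (convex_Icc _ _)
        (Continuous.continuousOn (f.continuous.comp hγ1.continuous))
      intro x hx
      show 0 < deriv (fun w => f (γ w)) x
      rw [(hg x).deriv]
      rw [interior_Icc] at hx
      have h4 := hmono (Set.left_mem_Icc.mpr (by linarith [hx.2])) ⟨hx.1.le, hx.2.le⟩ hx.1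
      simpa [hg'u] using h4
    have h5 : f (γ u) < f (γ (u + ε / 2)) :=
      hmono2 (Set.left_mem_Icc.mpr (by linarith)) (Set.right_mem_Icc.mpr (by linarith))
        (by linarith)
    exact absurd (hfle _ (hmemK (u + ε / 2))) (not_le.mpr h5)
  -- representation of f via a normal vector
  set a0 := f (EuclideanSpace.single (0 : Fin 2) (1:ℝ)) with ha0
  set a1 := f (EuclideanSpace.single (1 : Fin 2) (1:ℝ)) with ha1
  have frepr : ∀ z : R2, f z = z 0 * a0 + z 1 * a1 := by
    intro z
    have hz : z = z 0 • EuclideanSpace.single (0 : Fin 2) (1:ℝ)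
        + z 1 • EuclideanSpace.single (1 : Fin 2) (1:ℝ) := by
      ext i
      fin_cases i <;>
        simp [EuclideanSpace.single_apply, PiLp.add_apply, PiLp.smul_apply, smul_eq_mul]
    conv_lhs => rw [hz]
    rw [map_add, f.map_smul, f.map_smul, smul_eq_mul, smul_eq_mul]
  have hv0 : deriv γ u 0 * a0 + deriv γ u 1 * a1 = 0 := by
    rw [← frepr]; exact hg'u
  obtain ⟨μ, hμ0, hμ1⟩ : ∃ μ : ℝ, a0 = -μ * deriv γ u 1 ∧ a1 = μ * deriv γ u 0 := by
    by_cases h0 : deriv γ u 0 = 0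
    · have h1 : deriv γ u 1 ≠ 0 := by
        intro h1
        apply hreg
        ext i
        fin_cases i <;> simp [h0, h1]
      refine ⟨-a0 / deriv γ u 1, by field_simp, ?_⟩
      rw [h0, mul_zero]
      rw [h0, zero_mul] at hv0
      rcases mul_eq_zero.mp (by linarith : deriv γ u 1 * a1 = 0) with h | h
      · exact absurd h h1
      · exact h
    · refine ⟨a1 / deriv γ u 0, ?_, by field_simp⟩
      have e : a0 = -(a1 * deriv γ u 1) / deriv γ u 0 := by
        rw [eq_div_iff h0]
        linear_combination hv0
      rw [e]
      ring
  have hfz : ∀ z : R2, f z = μ * det2 (deriv γ u) z := by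
    intro z; rw [frepr, hμ0, hμ1, det2]; ring
  have hx0lt : f x₀ < f (γ u) := hf x₀ hx₀
  have key1 : μ * det2 (γ u - x₀) (deriv γ u) < 0 := by
    have h6 : f (x₀ - γ u) < 0 := by rw [map_sub]; linarith
    rw [hfz] at h6
    have h7 : μ * det2 (γ u - x₀) (deriv γ u) = μ * det2 (deriv γ u) (x₀ - γ u) := by
      simp only [det2, PiLp.sub_apply]; ring
    rw [h7]; exact h6
  have key2 : μ * det2 (deriv γ u) (deriv (deriv γ) u) ≤ 0 := by
    rw [← hfz]; exact hg2
  have hμne : μ ≠ 0 := by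
    intro h
    rw [h, zero_mul] at key1
    exact lt_irrefl 0 key1
  constructor
  · intro h0
    rw [h0, mul_zero] at key1
    exact lt_irrefl 0 key1
  · by_contra hneg
    push_neg at hneg
    have hμ2 : 0 < μ ^ 2 := pow_two_pos_of_ne_zero hμne
    nlinarith [mul_nonneg (neg_nonneg.mpr key2) (neg_nonneg.mpr key1.le),
      mul_pos hμ2 (neg_pos.mpr hneg)]

lemma kappa_nonneg {γ : ℝ → R2} {L : ℝ} (hL : 0 < L) (hγ : ContDiff ℝ 2 γ)
    (hper : ∀ s, γ (s + L) = γ s) (hreg : ∀ s, deriv γ s ≠ 0)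
    (hor : 0 < ∫ s in (0:ℝ)..L, det2 (γ s) (deriv γ s))
    {K : Set R2} (hKconv : Convex ℝ K) (hKcomp : IsCompact K)
    (hKint : (interior K).Nonempty) (hKbd : frontier K = Set.range γ) :
    ∀ u, 0 ≤ det2 (deriv γ u) (deriv (deriv γ) u) := by
  obtain ⟨x₀, hx₀⟩ := hKint
  have hγ1 : ContDiff ℝ 1 γ := hγ.of_le (by norm_num)
  have hd1 : ContDiff ℝ 1 (deriv γ) := aux_smooth1 hγ
  have hdγ : ∀ v, HasDerivAt γ (deriv γ v) v := aux_hd hγ1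
  have hsupp := fun u => support_aux hγ hKconv hKcomp hKbd hx₀ u (hreg u)
  have hcont : Continuous fun u => det2 (γ u - x₀) (deriv γ u) :=
    cont_det2 (hγ1.continuous.sub continuous_const) (aux_smooth0 hγ1)
  -- the integral of h over a period equals the orientation integral
  have e2 : ∫ u in (0:ℝ)..L, det2 x₀ (deriv γ u) = det2 x₀ (γ L) - det2 x₀ (γ 0) := by
    apply intervalIntegral.integral_eq_sub_of_hasDerivAt
    · intro x _
      have h1 := (hasDerivAt_coord (hdγ x) 1).const_mul (x₀ 0)
      have h0 := (hasDerivAt_coord (hdγ x) 0).const_mul (x₀ 1)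
      exact h1.sub h0
    · exact (cont_det2 continuous_const (aux_smooth0 hγ1)).intervalIntegrable _ _
  have hγL : γ L = γ 0 := by have := hper 0; rwa [zero_add] at this
  have hint : ∫ u in (0:ℝ)..L, det2 (γ u - x₀) (deriv γ u)
      = ∫ s in (0:ℝ)..L, det2 (γ s) (deriv γ s) := by
    have e3 : ∫ u in (0:ℝ)..L, det2 (γ u - x₀) (deriv γ u)
        = (∫ u in (0:ℝ)..L, det2 (γ u) (deriv γ u)) - ∫ u in (0:ℝ)..L, det2 x₀ (deriv γ u) := by
      rw [← intervalIntegral.integral_sub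
        ((cont_det2 hγ1.continuous (aux_smooth0 hγ1)).intervalIntegrable _ _)
        ((cont_det2 continuous_const (aux_smooth0 hγ1)).intervalIntegrable _ _)]
      apply intervalIntegral.integral_congr
      intro x _
      simp only [det2, PiLp.sub_apply]
      ring
    rw [e3, e2, hγL]
    ring
  -- h never vanishes, hence has constant sign; the integral is positive, so h > 0
  have hpos : ∀ u, 0 < det2 (γ u - x₀) (deriv γ u) := by
    by_contra hcon
    push_neg at hcon
    obtain ⟨u₀, hu₀⟩ := hcon
    have hu₀' : det2 (γ u₀ - x₀) (deriv γ u₀) < 0 := lt_of_le_of_ne hu₀ (hsupp u₀).1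
    have hallneg : ∀ u, det2 (γ u - x₀) (deriv γ u) < 0 := by
      intro u
      by_contra hge
      push_neg at hge
      have hgt : 0 < det2 (γ u - x₀) (deriv γ u) := lt_of_le_of_ne hge (Ne.symm (hsupp u).1)
      have hmem : (0:ℝ) ∈ Set.uIcc (det2 (γ u₀ - x₀) (deriv γ u₀)) (det2 (γ u - x₀) (deriv γ u)) :=
        Set.mem_uIcc.mpr (Or.inl ⟨hu₀'.le, hgt.le⟩)
      obtain ⟨x, _, hx⟩ := intermediate_value_uIcc (hcont.continuousOn) hmem
      exact (hsupp x).1 hx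
    have hneg : 0 < ∫ u in (0:ℝ)..L, -det2 (γ u - x₀) (deriv γ u) := by
      apply intervalIntegral.integral_pos hL (hcont.neg.continuousOn)
      · intro x _
        exact (neg_pos.mpr (hallneg x)).le
      · exact ⟨0, Set.left_mem_Icc.mpr hL.le, neg_pos.mpr (hallneg 0)⟩
    rw [intervalIntegral.integral_neg] at hneg
    rw [hint] at hneg
    linarith
  intro u
  nlinarith [(hsupp u).2, hpos u]

lemma aux_tderiv {γ : ℝ → R2} (hγ1 : ContDiff ℝ 1 γ) {t : ℝ → ℝ} (ht : ContDiff ℝ 1 t)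
    {δ : ℝ} (hA : ∀ s, (1/2) * ∫ u in s..t s, det2 (γ u - γ s) (deriv γ u) = δ) :
    ∀ s, deriv t s * det2 (γ (t s) - γ s) (deriv γ (t s)) + det2 (γ (t s) - γ s) (deriv γ s) = 0 := by
  have hdγ : ∀ v, HasDerivAt γ (deriv γ v) v := aux_hd hγ1
  have hpc : Continuous fun u => det2 (γ u) (deriv γ u) :=
    cont_det2 hγ1.continuous (aux_smooth0 hγ1)
  set P : ℝ → ℝ := fun s => ∫ u in (0:ℝ)..s, det2 (γ u) (deriv γ u) with hPdef
  have hPd : ∀ s, HasDerivAt P (det2 (γ s) (deriv γ s)) s := fun s =>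
    intervalIntegral.integral_hasDerivAt_right (hpc.intervalIntegrable _ _)
      (hpc.stronglyMeasurableAtFilter _ _) hpc.continuousAt
  have key : ∀ s, P (t s) - P s - det2 (γ s) (γ (t s)) = 2 * δ := by
    intro s
    have e1 : P (t s) - P s = ∫ u in s..t s, det2 (γ u) (deriv γ u) := by
      have h := intervalIntegral.integral_add_adjacent_intervals (μ := volume)
        (hpc.intervalIntegrable 0 s) (hpc.intervalIntegrable s (t s))
      show (∫ u in (0:ℝ)..t s, det2 (γ u) (deriv γ u))
        - (∫ u in (0:ℝ)..s, det2 (γ u) (deriv γ u)) = ∫ u in s..t s, det2 (γ u) (deriv γ u)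
      linarith
    have e2 : ∫ u in s..t s, det2 (γ s) (deriv γ u) = det2 (γ s) (γ (t s)) - det2 (γ s) (γ s) := by
      apply intervalIntegral.integral_eq_sub_of_hasDerivAt (f := fun u => det2 (γ s) (γ u))
      · intro x _
        have h1 := (hasDerivAt_coord (hdγ x) 1).const_mul (γ s 0)
        have h0 := (hasDerivAt_coord (hdγ x) 0).const_mul (γ s 1)
        exact h1.sub h0
      · exact (cont_det2 continuous_const (aux_smooth0 hγ1)).intervalIntegrable _ _
    have e3 : ∫ u in s..t s, det2 (γ u - γ s) (deriv γ u)
        = (∫ u in s..t s, det2 (γ u) (deriv γ u)) - ∫ u in s..t s, det2 (γ s) (deriv γ u) := by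
      rw [← intervalIntegral.integral_sub (hpc.intervalIntegrable _ _)
        ((cont_det2 continuous_const (aux_smooth0 hγ1)).intervalIntegrable _ _)]
      apply intervalIntegral.integral_congr
      intro x _
      simp only [det2, PiLp.sub_apply]
      ring
    have hAs := hA s
    have hdd : det2 (γ s) (γ s) = 0 := by simp only [det2]; ring
    rw [e3, e2, hdd, e1.symm] at hAs
    linarith
  intro s
  have htd : HasDerivAt t (deriv t s) s := ((ht.differentiable one_ne_zero) s).hasDerivAt
  have h1 : HasDerivAt (fun s => P (t s))
      ((γ (t s) 0 * deriv γ (t s) 1 - γ (t s) 1 * deriv γ (t s) 0) * deriv t s) s :=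
    (hPd (t s)).comp s htd
  have h2 : HasDerivAt P (γ s 0 * deriv γ s 1 - γ s 1 * deriv γ s 0) s := hPd s
  have c0 := hasDerivAt_coord (hdγ s) 0
  have c1 := hasDerivAt_coord (hdγ s) 1
  have d0 : HasDerivAt (fun s => γ (t s) 0) (deriv γ (t s) 0 * deriv t s) s :=
    (hasDerivAt_coord (hdγ (t s)) 0).comp s htd
  have d1 : HasDerivAt (fun s => γ (t s) 1) (deriv γ (t s) 1 * deriv t s) s :=
    (hasDerivAt_coord (hdγ (t s)) 1).comp s htd
  have hQ : HasDerivAt (fun s => det2 (γ s) (γ (t s)))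
      (deriv γ s 0 * γ (t s) 1 + γ s 0 * (deriv γ (t s) 1 * deriv t s)
        - (deriv γ s 1 * γ (t s) 0 + γ s 1 * (deriv γ (t s) 0 * deriv t s))) s :=
    (c0.mul d1).sub (c1.mul d0)
  have hΦ : HasDerivAt (fun s => P (t s) - P s - det2 (γ s) (γ (t s))) _ s := (h1.sub h2).sub hQ
  have hconst : (fun s => P (t s) - P s - det2 (γ s) (γ (t s))) = fun _ => 2 * δ := funext key
  rw [hconst] at hΦ
  have hD0 := hΦ.unique (hasDerivAt_const _ _)
  simp only [det2, PiLp.sub_apply]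
  linear_combination hD0

lemma aux_F_deriv {γ : ℝ → R2} (hγ : ContDiff ℝ 2 γ) {t : ℝ → ℝ} (ht : ContDiff ℝ 1 t) :
    ∀ s, HasDerivAt (fun s => ∫ u in s..t s, det2 (deriv γ u) (deriv (deriv γ) u) ^ ((1:ℝ)/3))
      ((det2 (deriv γ (t s)) (deriv (deriv γ) (t s)) ^ ((1:ℝ)/3)) * deriv t s
        - det2 (deriv γ s) (deriv (deriv γ) s) ^ ((1:ℝ)/3)) s := by
  have hd1 : ContDiff ℝ 1 (deriv γ) := aux_smooth1 hγ
  have hκc : Continuous fun u => det2 (deriv γ u) (deriv (deriv γ) u) :=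
    cont_det2 hd1.continuous (aux_smooth0 hd1)
  set q : ℝ → ℝ := fun u => det2 (deriv γ u) (deriv (deriv γ) u) ^ ((1:ℝ)/3) with hqdef
  have hqc : Continuous q := by
    rw [continuous_iff_continuousAt]
    intro x
    exact (Real.continuousAt_rpow_const _ _ (Or.inr (by norm_num))).comp hκc.continuousAt
  set Qi : ℝ → ℝ := fun s => ∫ u in (0:ℝ)..s, q u with hQidef
  have hQd : ∀ s, HasDerivAt Qi (q s) s := fun s =>
    intervalIntegral.integral_hasDerivAt_right (hqc.intervalIntegrable _ _)
      (hqc.stronglyMeasurableAtFilter _ _) hqc.continuousAt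
  intro s
  have hfe : (fun s => ∫ u in s..t s, q u) = fun s => Qi (t s) - Qi s := by
    funext s
    have h := intervalIntegral.integral_add_adjacent_intervals (μ := volume)
      (hqc.intervalIntegrable 0 s) (hqc.intervalIntegrable s (t s))
    show (∫ u in s..t s, q u) = (∫ u in (0:ℝ)..t s, q u) - ∫ u in (0:ℝ)..s, q u
    linarith
  have htd : HasDerivAt t (deriv t s) s := ((ht.differentiable one_ne_zero) s).hasDerivAt
  have h1 : HasDerivAt (fun s => Qi (t s)) (q (t s) * deriv t s) s := (hQd (t s)).comp s htd
  have : HasDerivAt (fun s => Qi (t s) - Qi s) _ s := h1.sub (hQd s)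
  rw [← hfe] at this
  exact this

/-- the equal-curvature-against-the-chord condition is equivalent to the
constancy of the affine arc length cut off by the chords of flotation. -/
theorem stmt11
    (γ : ℝ → R2) (L : ℝ) (hL : 0 < L)
    (hγ : ContDiff ℝ 2 γ)
    (hper : ∀ s, γ (s + L) = γ s)
    (hreg : ∀ s, deriv γ s ≠ 0)
    (hinj : Set.InjOn γ (Set.Ico 0 L))
    (hor : 0 < ∫ s in (0:ℝ)..L, det2 (γ s) (deriv γ s))
    (K : Set R2) (hKconv : Convex ℝ K) (hKcomp : IsCompact K)
    (hKint : (interior K).Nonempty) (hKbd : frontier K = Set.range γ)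
    (δ : ℝ) (hδ0 : 0 < δ) (hδK : δ < (volume K).toReal)
    (t : ℝ → ℝ) (ht : ContDiff ℝ 1 t)
    (htrange : ∀ s, s < t s ∧ t s < s + L)
    (hA : ∀ s, (1/2) * ∫ u in s..t s, det2 (γ u - γ s) (deriv γ u) = δ)
    (hc1 : ∀ s, det2 (γ (t s) - γ s) (deriv γ s) ≠ 0)
    (hc2 : ∀ s, det2 (γ (t s) - γ s) (deriv γ (t s)) ≠ 0) :
    (∀ s : ℝ,
        det2 (γ (t s) - γ s) (deriv γ s) ^ 3 * det2 (deriv γ (t s)) (deriv (deriv γ) (t s)) +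
          det2 (γ (t s) - γ s) (deriv γ (t s)) ^ 3 * det2 (deriv γ s) (deriv (deriv γ) s) = 0) ↔
      (∃ C : ℝ, ∀ s : ℝ,
        (∫ u in s..t s, det2 (deriv γ u) (deriv (deriv γ) u) ^ ((1:ℝ)/3)) = C) := by
  have hκ := kappa_nonneg hL hγ hper hreg hor hKconv hKcomp hKint hKbd
  have hrel := aux_tderiv (hγ.of_le (by norm_num)) ht hA
  have hF := aux_F_deriv hγ ht
  constructor
  · intro h
    refine ⟨∫ u in (0:ℝ)..t 0, det2 (deriv γ u) (deriv (deriv γ) u) ^ ((1:ℝ)/3), fun s => ?_⟩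
    apply is_const_of_deriv_eq_zero
      (f := fun s => ∫ u in s..t s, det2 (deriv γ u) (deriv (deriv γ) u) ^ ((1:ℝ)/3))
    · exact fun x => (hF x).differentiableAt
    · intro x
      rw [(hF x).deriv]
      have hp := (ptwise (hc2 x) (hrel x) (hκ x) (hκ (t x))).mp (h x)
      linarith [hp]
  · rintro ⟨C, hC⟩ s
    have hFC : (fun s => ∫ u in s..t s, det2 (deriv γ u) (deriv (deriv γ) u) ^ ((1:ℝ)/3))
        = fun _ => C := funext hC
    have hd := hF s
    rw [hFC] at hd
    have h0 := hd.unique (hasDerivAt_const _ _)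
    exact (ptwise (hc2 s) (hrel s) (hκ s) (hκ (t s))).mpr (by linarith [h0])
end
end
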